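/- arXiv:2212.06059 — 6 statements merged into one kernel-verified Lean document; each statement's English description precedes it below -/
import Mathlib

section
/- Let (X,d,m) be a metric measure space with (X,d) proper, geodesic and non-branching, let Ω ⊆ X be open with ∂Ω ≠ ∅, and let ε > 0. If Ω verifies the ε-uniform interior ball condition and every point of ∂Ω verifies the exterior ball condition, then {x ∈ X : 0 < δ(x) < ε} ⊆ O_ε; in particular ∂Ω satisfies the measured interior geodesic condition of size ε (mIGC_ε). -/
open Metric Set Filter MeasureTheory

variable {X : Type*}

/-- A geodesic parameterized on `[0,1]`. -/
def IsGeodesic [MetricSpace X] (γ : ℝ → X) : Prop :=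
  ∀ s ∈ Set.Icc (0:ℝ) 1, ∀ t ∈ Set.Icc (0:ℝ) 1,
    dist (γ s) (γ t) = |s - t| * dist (γ 0) (γ 1)

/-- Every pair of points is joined by a geodesic. -/
def GeodesicSpace' (X : Type*) [MetricSpace X] : Prop :=
  ∀ x y : X, ∃ γ : ℝ → X, IsGeodesic γ ∧ γ 0 = x ∧ γ 1 = y

/-- Non-branching: two geodesics agreeing on `[0,t]`, `t ∈ (0,1)`, agree on `[0,1]`. -/
def NonBranching (X : Type*) [MetricSpace X] : Prop :=
  ∀ γ₁ γ₂ : ℝ → X, IsGeodesic γ₁ → IsGeodesic γ₂ →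
    ∀ t ∈ Set.Ioo (0:ℝ) 1, (∀ s ∈ Set.Icc (0:ℝ) t, γ₁ s = γ₂ s) →
      ∀ s ∈ Set.Icc (0:ℝ) 1, γ₁ s = γ₂ s

open scoped Classical in
/-- Signed distance from the boundary of `Ω`. -/
noncomputable def signedDist' [MetricSpace X] (Ω : Set X) (x : X) : ℝ :=
  if x ∈ Ω then Metric.infDist x (frontier Ω) else -Metric.infDist x (frontier Ω)
/-- The set `O_ε` of points covered by geodesics of length `≥ ε` minimizing the
distance from `∂Ω`. -/
def Oeps [MetricSpace X] (Ω : Set X) (ε : ℝ) : Set X :=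
  {x | x ∈ Ω ∧ ∃ γ : ℝ → X, IsGeodesic γ ∧ (∃ t ∈ Set.Icc (0:ℝ) 1, γ t = x) ∧
    γ 0 ∈ frontier Ω ∧ signedDist' Ω (γ 1) = dist (γ 0) (γ 1) ∧ ε ≤ dist (γ 0) (γ 1)}

/-- The measured interior geodesic condition of size `ε`. -/
def mIGC [MetricSpace X] [MeasurableSpace X] (μ : Measure X) (Ω : Set X) (ε : ℝ) : Prop :=
  μ ({x | 0 < signedDist' Ω x ∧ signedDist' Ω x < ε} \ Oeps Ω ε) = 0
/-- `x ∈ ∂Ω` verifies the interior ball condition with radius `r`. -/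
def IntBallCondAt [MetricSpace X] (Ω : Set X) (x : X) (r : ℝ) : Prop :=
  0 < r ∧ ∃ p ∈ Ω, Metric.ball p r ⊆ Ω ∧ dist x p = r

/-- `x ∈ ∂Ω` verifies the exterior ball condition. -/
def ExtBallCondAt [MetricSpace X] (Ω : Set X) (x : X) : Prop :=
  ∃ q ∈ (closure Ω)ᶜ, ∃ r > 0, Metric.ball q r ⊆ (closure Ω)ᶜ ∧ dist x q = r

/-- `Ω` verifies the `ε`-uniform interior ball condition. -/
def UniformIntBall [MetricSpace X] (Ω : Set X) (ε : ℝ) : Prop :=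
  ∀ x ∈ frontier Ω, ∃ r, ε ≤ r ∧ IntBallCondAt Ω x r

section Aux
variable [MetricSpace X]

lemma IsGeodesic.continuousOn {γ : ℝ → X} (h : IsGeodesic γ) :
    ContinuousOn γ (Set.Icc 0 1) := by
  have : LipschitzOnWith (Real.toNNReal (dist (γ 0) (γ 1))) γ (Set.Icc 0 1) := by
    apply LipschitzOnWith.of_dist_le_mul
    intro s hs t ht
    rw [h s hs t ht, Real.coe_toNNReal _ dist_nonneg, Real.dist_eq, mul_comm]
  exact this.continuousOn

lemma IsGeodesic.scale {γ : ℝ → X} (h : IsGeodesic γ) {k : ℝ} (hk0 : 0 ≤ k) (hk1 : k ≤ 1) :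
    IsGeodesic (fun t => γ (k * t)) := by
  intro s hs t ht
  have hks : k * s ∈ Set.Icc (0:ℝ) 1 :=
    ⟨mul_nonneg hk0 hs.1, by nlinarith [hs.1, hs.2]⟩
  have hkt : k * t ∈ Set.Icc (0:ℝ) 1 :=
    ⟨mul_nonneg hk0 ht.1, by nlinarith [ht.1, ht.2]⟩
  have hk : k ∈ Set.Icc (0:ℝ) 1 := ⟨hk0, hk1⟩
  have e0 : dist (γ 0) (γ k) = k * dist (γ 0) (γ 1) := by
    rw [h 0 ⟨le_refl 0, zero_le_one⟩ k hk, zero_sub, abs_neg, abs_of_nonneg hk0]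
  simp only
  rw [h (k*s) hks (k*t) hkt, mul_zero, mul_one, e0]
  have : |k * s - k * t| = k * |s - t| := by
    rw [← mul_sub, abs_mul, abs_of_nonneg hk0]
  rw [this]; ring

lemma concat_dist {a b : ℝ} {α β : ℝ → X} (hα : IsGeodesic α) (hβ : IsGeodesic β)
    (hmid : α 1 = β 0) (hda : dist (α 0) (α 1) = a) (hdb : dist (β 0) (β 1) = b)
    (hsum : dist (α 0) (β 1) = a + b)
    {u v : ℝ} (hu : u ∈ Set.Icc (0:ℝ) 1) (hv : v ∈ Set.Icc (0:ℝ) 1) :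
    dist (α u) (β v) = (1 - u) * a + v * b := by
  have h01 : (0:ℝ) ∈ Set.Icc (0:ℝ) 1 := ⟨le_refl 0, zero_le_one⟩
  have h11 : (1:ℝ) ∈ Set.Icc (0:ℝ) 1 := ⟨zero_le_one, le_refl 1⟩
  have e1 : dist (α 0) (α u) = u * a := by
    rw [hα 0 h01 u hu, hda, zero_sub, abs_neg, abs_of_nonneg hu.1]
  have e2 : dist (α u) (α 1) = (1 - u) * a := by
    rw [hα u hu 1 h11, hda, abs_of_nonpos (by linarith [hu.2])]; ring
  have e3 : dist (β 0) (β v) = v * b := by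
    rw [hβ 0 h01 v hv, hdb, zero_sub, abs_neg, abs_of_nonneg hv.1]
  have e4 : dist (β v) (β 1) = (1 - v) * b := by
    rw [hβ v hv 1 h11, hdb, abs_of_nonpos (by linarith [hv.2])]; ring
  have t1 : dist (α u) (β v) ≤ (1 - u) * a + v * b := by
    calc dist (α u) (β v) ≤ dist (α u) (α 1) + dist (α 1) (β v) := dist_triangle _ _ _
      _ = (1 - u) * a + v * b := by rw [e2, hmid, e3]
  have t2 : a + b ≤ dist (α 0) (α u) + dist (α u) (β v) + dist (β v) (β 1) := by
    rw [← hsum]; exact dist_triangle4 _ _ _ _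
  rw [e1] at t2; rw [e4] at t2
  linarith

lemma concat_isGeodesic {a b : ℝ} (ha : 0 < a) (hb : 0 < b)
    {α β : ℝ → X} (hα : IsGeodesic α) (hβ : IsGeodesic β)
    (hmid : α 1 = β 0)
    (hda : dist (α 0) (α 1) = a) (hdb : dist (β 0) (β 1) = b)
    (hsum : dist (α 0) (β 1) = a + b) :
    IsGeodesic (fun t => if t * (a + b) ≤ a then α (t * (a + b) / a)
      else β ((t * (a + b) - a) / b)) := by
  have hab : 0 < a + b := by linarith
  set Γ : ℝ → X := fun t => if t * (a + b) ≤ a then α (t * (a + b) / a)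
      else β ((t * (a + b) - a) / b) with hΓ
  have hΓ0 : Γ 0 = α 0 := by
    have h : (0:ℝ) * (a+b) ≤ a := by linarith
    simp only [hΓ, if_pos h, zero_mul, zero_div]
  have hΓ1 : Γ 1 = β 1 := by
    have h : ¬ ((1:ℝ) * (a+b) ≤ a) := by simp; linarith
    simp only [hΓ, if_neg h]
    have : ((1:ℝ) * (a+b) - a) / b = 1 := by field_simp; ring
    rw [this]
  have hd01 : dist (Γ 0) (Γ 1) = a + b := by rw [hΓ0, hΓ1, hsum]
  have memα : ∀ t : ℝ, t ∈ Set.Icc (0:ℝ) 1 → t * (a+b) ≤ a →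
      t * (a+b) / a ∈ Set.Icc (0:ℝ) 1 := fun t ht h =>
    ⟨div_nonneg (mul_nonneg ht.1 hab.le) ha.le, (div_le_one ha).mpr h⟩
  have memβ : ∀ t : ℝ, t ∈ Set.Icc (0:ℝ) 1 → ¬ (t * (a+b) ≤ a) →
      (t * (a+b) - a) / b ∈ Set.Icc (0:ℝ) 1 := by
    intro t ht h
    push_neg at h
    constructor
    · apply div_nonneg _ hb.le; linarith
    · rw [div_le_one hb]
      nlinarith [ht.2]
  have main : ∀ s ∈ Set.Icc (0:ℝ) 1, ∀ t ∈ Set.Icc (0:ℝ) 1, s ≤ t →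
      dist (Γ s) (Γ t) = (t - s) * (a + b) := by
    intro s hs t ht hst
    by_cases h1 : s * (a+b) ≤ a
    · by_cases h2 : t * (a+b) ≤ a
      · simp only [hΓ, if_pos h1, if_pos h2]
        rw [hα _ (memα s hs h1) _ (memα t ht h2), hda]
        have e : s * (a+b) / a - t * (a+b) / a = -((t - s) * (a+b) / a) := by ring
        rw [e, abs_neg, abs_of_nonneg
          (div_nonneg (mul_nonneg (by linarith) hab.le) ha.le),
          div_mul_cancel₀ _ ha.ne']
      · simp only [hΓ, if_pos h1, if_neg h2]
        rw [concat_dist hα hβ hmid hda hdb hsum (memα s hs h1) (memβ t ht h2)]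
        field_simp
        ring
    · have h2 : ¬ (t * (a+b) ≤ a) := by
        push_neg at h1 ⊢; nlinarith
      simp only [hΓ, if_neg h1, if_neg h2]
      rw [hβ _ (memβ s hs h1) _ (memβ t ht h2), hdb]
      have e : (s * (a+b) - a) / b - (t * (a+b) - a) / b = -((t - s) * (a+b) / b) := by ring
      rw [e, abs_neg, abs_of_nonneg
        (div_nonneg (mul_nonneg (by linarith) hab.le) hb.le),
        div_mul_cancel₀ _ hb.ne']
  intro s hs t ht
  rw [show dist (Γ 0) (Γ 1) = a + b from hd01]
  rcases le_total s t with h | h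
  · rw [abs_of_nonpos (by linarith), main s hs t ht h]; ring
  · rw [abs_of_nonneg (by linarith), dist_comm, main t ht s hs h]

lemma geodesic_cross {Ω : Set X} (hΩne : Ω.Nonempty) (hΩcne : Ωᶜ.Nonempty)
    {σ : ℝ → X} (hσ : IsGeodesic σ) (h0 : σ 0 ∈ Ω) (h1 : σ 1 ∉ closure Ω) :
    ∃ t ∈ Set.Icc (0:ℝ) 1, σ t ∈ frontier Ω := by
  set f : ℝ → ℝ := fun t => infDist (σ t) Ωᶜ - infDist (σ t) Ω with hf
  have hcont : ContinuousOn f (Set.Icc 0 1) :=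
    ((continuous_infDist_pt Ωᶜ).sub (continuous_infDist_pt Ω)).comp_continuousOn
      hσ.continuousOn
  have hf1 : f 1 ≤ 0 := by
    have h1' : σ 1 ∈ Ωᶜ := fun h => h1 (subset_closure h)
    have e : infDist (σ 1) Ωᶜ = 0 := infDist_zero_of_mem h1'
    simp only [hf, e]
    have : 0 < infDist (σ 1) Ω := by
      rcases lt_or_eq_of_le (infDist_nonneg (x := σ 1) (s := Ω)) with h | h
      · exact h
      · exact absurd ((mem_closure_iff_infDist_zero hΩne).mpr h.symm) h1
    linarith
  have hf0 : 0 ≤ f 0 := by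
    have e : infDist (σ 0) Ω = 0 := infDist_zero_of_mem h0
    simp only [hf, e, sub_zero]
    exact infDist_nonneg
  have : (0:ℝ) ∈ f '' Set.Icc 0 1 :=
    intermediate_value_Icc' zero_le_one hcont ⟨hf1, hf0⟩
  obtain ⟨t, ht, hft⟩ := this
  refine ⟨t, ht, ?_⟩
  rw [frontier_eq_closure_inter_closure]
  have hftz : infDist (σ t) Ωᶜ = infDist (σ t) Ω := by
    have : infDist (σ t) Ωᶜ - infDist (σ t) Ω = 0 := hft
    linarith
  by_cases h : σ t ∈ Ω
  · have h1' : infDist (σ t) Ω = 0 := infDist_zero_of_mem h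
    have h2' : infDist (σ t) Ωᶜ = 0 := by rw [hftz, h1']
    exact ⟨subset_closure h, (mem_closure_iff_infDist_zero hΩcne).mpr h2'⟩
  · have h1' : infDist (σ t) Ωᶜ = 0 := infDist_zero_of_mem h
    have h2' : infDist (σ t) Ω = 0 := by rw [← hftz, h1']
    exact ⟨(mem_closure_iff_infDist_zero hΩne).mpr h2', subset_closure h⟩

end Aux

/-- the ε-uniform interior ball condition plus the exterior ball
condition at every boundary point imply `{0 < δ < ε} ⊆ O_ε`, hence the mIGC_ε
condition. -/
theorem uniform_ball_implies_mIGC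
    [MetricSpace X] [ProperSpace X] [MeasurableSpace X] [BorelSpace X]
    (μ : Measure X)
    (hfin : ∀ s : Set X, Bornology.IsBounded s → μ s < ⊤)
    (hgeo : GeodesicSpace' X) (hnb : NonBranching X)
    (Ω : Set X) (hΩ : IsOpen Ω) (hfr : (frontier Ω).Nonempty)
    (ε : ℝ) (hε : 0 < ε)
    (hball : UniformIntBall Ω ε)
    (hext : ∀ x ∈ frontier Ω, ExtBallCondAt Ω x) :
    {x | 0 < signedDist' Ω x ∧ signedDist' Ω x < ε} ⊆ Oeps Ω ε ∧ mIGC μ Ω ε := by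
  have key : {x | 0 < signedDist' Ω x ∧ signedDist' Ω x < ε} ⊆ Oeps Ω ε := by
    rintro x ⟨hx0, hxε⟩
    have hxΩ : x ∈ Ω := by
      by_contra h
      simp only [signedDist', if_neg h] at hx0
      linarith [infDist_nonneg (x := x) (s := frontier Ω)]
    set δ := signedDist' Ω x with hδdef
    have hδ0 : 0 < δ := hx0
    have hδeq : δ = infDist x (frontier Ω) := by
      rw [hδdef]; simp only [signedDist', if_pos hxΩ]
    obtain ⟨y, hy, hxy⟩ := isClosed_frontier.exists_infDist_eq_dist hfr x
    have hdxy : dist x y = δ := by rw [← hxy, ← hδeq]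
    obtain ⟨r, hεr, hr0, p, hpΩ, hpball, hyp⟩ := hball y hy
    obtain ⟨q, hq, s, hs0, hqball, hyq⟩ := hext y hy
    have hqΩ : q ∉ Ω := fun h => hq (subset_closure h)
    have hΩne : Ω.Nonempty := ⟨x, hxΩ⟩
    have hΩcne : Ωᶜ.Nonempty := ⟨q, hqΩ⟩
    have hδr : δ < r := lt_of_lt_of_le hxε hεr
    have hfrnotΩ : ∀ z ∈ frontier Ω, z ∉ Ω := by
      intro z hz
      rw [hΩ.frontier_eq] at hz; exact hz.2
    have hrle : ∀ z ∈ frontier Ω, r ≤ dist p z := by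
      intro z hz
      by_contra h; push_neg at h
      exact hfrnotΩ z hz (hpball (by rw [mem_ball, dist_comm]; exact h))
    have hδp : signedDist' Ω p = r := by
      simp only [signedDist', if_pos hpΩ]
      refine le_antisymm ?_ ?_
      · calc infDist p (frontier Ω) ≤ dist p y := infDist_le_dist_of_mem hy
          _ = r := by rw [dist_comm]; exact hyp
      · by_contra h; push_neg at h
        obtain ⟨z, hz, hzd⟩ := (infDist_lt_iff hfr).mp h
        exact absurd hzd (not_lt.mpr (hrle z hz))
    have hsle : ∀ z ∈ frontier Ω, s ≤ dist z q := by
      intro z hz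
      by_contra h; push_neg at h
      exact (hqball (mem_ball.mpr h)) (frontier_subset_closure hz)
    have cross_bound : ∀ x' : X, x' ∈ Ω → ∀ c : ℝ,
        (∀ z ∈ frontier Ω, c ≤ dist x' z) → c + s ≤ dist x' q := by
      intro x' hx' c hc
      obtain ⟨σ, hσ, hσ0, hσ1⟩ := hgeo x' q
      obtain ⟨t, ht, hz⟩ := geodesic_cross hΩne hΩcne hσ (by rw [hσ0]; exact hx')
        (by rw [hσ1]; exact hq)
      have h01 : (0:ℝ) ∈ Set.Icc (0:ℝ) 1 := ⟨le_refl 0, zero_le_one⟩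
      have h11 : (1:ℝ) ∈ Set.Icc (0:ℝ) 1 := ⟨zero_le_one, le_refl 1⟩
      have e1 : dist (σ 0) (σ t) = t * dist x' q := by
        rw [hσ 0 h01 t ht, hσ0, hσ1, zero_sub, abs_neg, abs_of_nonneg ht.1]
      have e2 : dist (σ t) (σ 1) = dist x' q - t * dist x' q := by
        rw [hσ t ht 1 h11, hσ0, hσ1, abs_of_nonpos (by linarith [ht.2])]; ring
      have hc' : c ≤ dist (σ 0) (σ t) := by rw [hσ0]; exact hc _ hz
      have hs' : s ≤ dist (σ t) (σ 1) := by rw [hσ1]; exact hsle _ hz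
      linarith
    have hdqx : dist q x = s + δ := by
      refine le_antisymm ?_ ?_
      · calc dist q x ≤ dist q y + dist y x := dist_triangle _ _ _
          _ = s + δ := by rw [dist_comm q y, hyq, dist_comm y x, hdxy]
      · have := cross_bound x hxΩ δ (fun z hz => by
          rw [hδeq]; exact infDist_le_dist_of_mem hz)
        rw [dist_comm]; linarith
    have hdqp : dist q p = s + r := by
      refine le_antisymm ?_ ?_
      · calc dist q p ≤ dist q y + dist y p := dist_triangle _ _ _
          _ = s + r := by rw [dist_comm q y, hyq, hyp]
      · have := cross_bound p hpΩ r hrle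
        rw [dist_comm]; linarith
    obtain ⟨α, hα, hα0, hα1⟩ := hgeo q y
    obtain ⟨β, hβ, hβ0, hβ1⟩ := hgeo y x
    obtain ⟨γ', hγ', hγ'0, hγ'1⟩ := hgeo y p
    have da : dist (α 0) (α 1) = s := by rw [hα0, hα1, dist_comm]; exact hyq
    have db : dist (β 0) (β 1) = δ := by rw [hβ0, hβ1, dist_comm]; exact hdxy
    have dg : dist (γ' 0) (γ' 1) = r := by rw [hγ'0, hγ'1]; exact hyp
    have hmid1 : α 1 = β 0 := by rw [hα1, hβ0]
    have hmid2 : α 1 = γ' 0 := by rw [hα1, hγ'0]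
    have hsum1 : dist (α 0) (β 1) = s + δ := by rw [hα0, hβ1]; exact hdqx
    have hsum2 : dist (α 0) (γ' 1) = s + r := by rw [hα0, hγ'1]; exact hdqp
    set Γ₁ : ℝ → X := fun t => if t * (s + δ) ≤ s then α (t * (s + δ) / s)
        else β ((t * (s + δ) - s) / δ) with hΓ₁def
    set Γ₂ : ℝ → X := fun t => if t * (s + r) ≤ s then α (t * (s + r) / s)
        else γ' ((t * (s + r) - s) / r) with hΓ₂def
    have hΓ₁ : IsGeodesic Γ₁ := concat_isGeodesic hs0 hδ0 hα hβ hmid1 da db hsum1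
    have hΓ₂ : IsGeodesic Γ₂ := concat_isGeodesic hs0 hr0 hα hγ' hmid2 da dg hsum2
    have hsδ : 0 < s + δ := by linarith
    have hsr : 0 < s + r := by linarith
    set k : ℝ := (s + δ) / (s + r) with hkdef
    have hk0 : 0 ≤ k := le_of_lt (div_pos hsδ hsr)
    have hk1 : k ≤ 1 := by rw [hkdef, div_le_one hsr]; linarith
    have hksr : k * (s + r) = s + δ := by
      rw [hkdef, div_mul_cancel₀ _ hsr.ne']
    have hΓ₂' : IsGeodesic (fun t => Γ₂ (k * t)) := hΓ₂.scale hk0 hk1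
    set t₀ : ℝ := s / (s + δ) with ht₀def
    have ht₀mem : t₀ ∈ Set.Ioo (0:ℝ) 1 :=
      ⟨div_pos hs0 hsδ, by rw [ht₀def, div_lt_one hsδ]; linarith⟩
    have hagree : ∀ u ∈ Set.Icc (0:ℝ) t₀, Γ₁ u = (fun t => Γ₂ (k * t)) u := by
      intro u hu
      have h1 : u * (s + δ) ≤ s := by
        rw [ht₀def] at hu
        exact (le_div_iff₀ hsδ).mp hu.2
      have h2 : (k * u) * (s + r) = u * (s + δ) := by
        rw [mul_comm k u, mul_assoc, hksr]
      have h2' : (k * u) * (s + r) ≤ s := by rw [h2]; exact h1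
      simp only [hΓ₁def, hΓ₂def, if_pos h1, if_pos h2']
      rw [h2]
    have hfinal := hnb Γ₁ (fun t => Γ₂ (k * t)) hΓ₁ hΓ₂' t₀ ht₀mem hagree
      1 ⟨zero_le_one, le_refl 1⟩
    have hΓ₁1 : Γ₁ 1 = x := by
      have h : ¬ ((1:ℝ) * (s + δ) ≤ s) := not_le.mpr (by linarith)
      simp only [hΓ₁def, if_neg h]
      have e : ((1:ℝ) * (s + δ) - s) / δ = 1 := by field_simp; ring
      rw [e, hβ1]
    have hΓ₂1 : (fun t => Γ₂ (k * t)) 1 = γ' (δ / r) := by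
      simp only [mul_one]
      have h : ¬ (k * (s + r) ≤ s) := by rw [hksr]; exact not_le.mpr (by linarith)
      simp only [hΓ₂def, if_neg h]
      rw [hksr]
      congr 1
      ring
    have hx_on : γ' (δ / r) = x := by rw [← hΓ₂1]; exact hfinal.symm.trans hΓ₁1
    refine ⟨hxΩ, γ', hγ', ⟨δ / r,
      ⟨div_nonneg hδ0.le hr0.le, (div_le_one hr0).mpr hδr.le⟩, hx_on⟩,
      ?_, ?_, ?_⟩
    · rw [hγ'0]; exact hy
    · rw [hγ'1, hδp, hγ'0]; exact hyp.symm
    · rw [dg]; exact hεr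
  exact ⟨key, by
    unfold mIGC
    rw [Set.diff_eq_empty.mpr key, measure_empty]⟩
end

section
/- Let (X,d,m) be a metric measure space with (X,d) proper, geodesic and non-branching, with m(B) > 0 for every nonempty open ball B (i.e. supp m = X). Let Ω ⊆ X be open with ∂Ω ≠ ∅, let ε > 0, and assume m(Ω ∖ T_δ^{nb}) = 0 for the signed distance δ. If ∂Ω satisfies the measured interior geodesic condition of size ε (mIGC_ε), then Ω verifies the ε-uniform interior ball condition. -/
open Metric Set Filter MeasureTheory

variable {X : Type*}

/-- The set `Γ_u`. -/
def Gamma [MetricSpace X] (u : X → ℝ) : Set (X × X) :=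
  {p | u p.1 - u p.2 = dist p.1 p.2}

/-- The transport relation `R_u = Γ_u ∪ Γ_u⁻¹`. -/
def Ru [MetricSpace X] (u : X → ℝ) : Set (X × X) :=
  Gamma u ∪ {p | (p.2, p.1) ∈ Gamma u}

/-- The transport set `T_u`. -/
def Tu [MetricSpace X] (u : X → ℝ) : Set X :=
  {x | ∃ y, y ≠ x ∧ (x, y) ∈ Ru u}

/-- The forward branching set `A⁺`. -/
def Aplus [MetricSpace X] (u : X → ℝ) : Set X :=
  {x ∈ Tu u | ∃ y z, (x, y) ∈ Gamma u ∧ (x, z) ∈ Gamma u ∧ (y, z) ∉ Ru u}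

/-- The backward branching set `A⁻`. -/
def Aminus [MetricSpace X] (u : X → ℝ) : Set X :=
  {x ∈ Tu u | ∃ y z, (y, x) ∈ Gamma u ∧ (z, x) ∈ Gamma u ∧ (y, z) ∉ Ru u}

/-- The non-branched transport set `T_u^{nb}`. -/
def Tnb [MetricSpace X] (u : X → ℝ) : Set X :=
  Tu u \ (Aplus u ∪ Aminus u)
open Topology

lemma crossing_aux [MetricSpace X] (hgeo : GeodesicSpace' X) {Ω : Set X} (hΩ : IsOpen Ω)
    {a b : X} (ha : a ∈ Ω) (hb : b ∉ Ω) :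
    Metric.infDist a (frontier Ω) + Metric.infDist b (frontier Ω) ≤ dist a b := by
  obtain ⟨γ, hγ, h0, h1⟩ := hgeo a b
  have h01 : (0:ℝ) ∈ Set.Icc (0:ℝ) 1 := by norm_num
  have h11 : (1:ℝ) ∈ Set.Icc (0:ℝ) 1 := by norm_num
  have hcont : ContinuousOn γ (Set.Icc 0 1) := by
    refine LipschitzOnWith.continuousOn (K := ⟨dist a b, dist_nonneg⟩) ?_
    refine LipschitzOnWith.of_dist_le_mul fun s hs t ht => ?_
    rw [hγ s hs t ht, h0, h1, Real.dist_eq]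
    exact le_of_eq (mul_comm _ _)
  have hconn : IsPreconnected (γ '' Set.Icc 0 1) := isPreconnected_Icc.image γ hcont
  have hmeet : (γ '' Set.Icc 0 1 ∩ frontier Ω).Nonempty := by
    by_contra hne
    rw [Set.not_nonempty_iff_eq_empty] at hne
    have hnf : ∀ y ∈ γ '' Set.Icc (0:ℝ) 1, y ∉ frontier Ω := by
      intro y hy hyf
      exact absurd (Set.mem_inter hy hyf) (by rw [hne]; exact Set.notMem_empty y)
    have hsub : γ '' Set.Icc (0:ℝ) 1 ⊆ Ω ∪ (closure Ω)ᶜ := by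
      intro y hy
      by_cases hyΩ : y ∈ Ω
      · exact Or.inl hyΩ
      · refine Or.inr fun hyc => hnf y hy ?_
        rw [hΩ.frontier_eq]; exact ⟨hyc, hyΩ⟩
    have hau : a ∈ γ '' Set.Icc (0:ℝ) 1 := ⟨0, h01, h0⟩
    have hbv : b ∈ γ '' Set.Icc (0:ℝ) 1 := ⟨1, h11, h1⟩
    have hbc : b ∉ closure Ω := fun hbc => hnf b hbv (by rw [hΩ.frontier_eq]; exact ⟨hbc, hb⟩)
    obtain ⟨y, _, hyu, hyv⟩ := hconn Ω (closure Ω)ᶜ hΩ isClosed_closure.isOpen_compl hsub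
      ⟨a, hau, ha⟩ ⟨b, hbv, hbc⟩
    exact hyv (subset_closure hyu)
  obtain ⟨c, ⟨t, ht, hct⟩, hcf⟩ := hmeet
  have hd1 : dist a c = t * dist a b := by
    have h := hγ 0 h01 t ht
    rw [hct, h0, h1] at h
    rwa [zero_sub, abs_neg, abs_of_nonneg ht.1] at h
  have hd2 : dist c b = (1 - t) * dist a b := by
    have h := hγ t ht 1 h11
    rw [hct, h0, h1] at h
    rwa [abs_of_nonpos (by linarith [ht.2] : t - 1 ≤ 0), neg_sub] at h
  have ha' : Metric.infDist a (frontier Ω) ≤ dist a c := Metric.infDist_le_dist_of_mem hcf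
  have hb' : Metric.infDist b (frontier Ω) ≤ dist b c := Metric.infDist_le_dist_of_mem hcf
  rw [dist_comm b c] at hb'
  nlinarith [ht.1, ht.2]

lemma signedDist_frontier [MetricSpace X] {Ω : Set X} {c : X} (hc : c ∈ frontier Ω) :
    signedDist' Ω c = 0 := by
  unfold signedDist'; split <;> simp [Metric.infDist_zero_of_mem hc]

lemma signedDist_sub_le [MetricSpace X] (hgeo : GeodesicSpace' X) {Ω : Set X} (hΩ : IsOpen Ω)
    (a b : X) : signedDist' Ω a ≤ signedDist' Ω b + dist a b := by
  unfold signedDist'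
  by_cases ha : a ∈ Ω <;> by_cases hb : b ∈ Ω <;>
    simp only [if_pos, if_neg, ha, hb, if_true, if_false]
  · exact Metric.infDist_le_infDist_add_dist
  · have := crossing_aux hgeo hΩ ha hb; linarith
  · have h1 := Metric.infDist_nonneg (s := frontier Ω) (x := a)
    have h2 := Metric.infDist_nonneg (s := frontier Ω) (x := b)
    linarith [dist_nonneg (x := a) (y := b)]
  · have := Metric.infDist_le_infDist_add_dist (x := b) (y := a) (s := frontier Ω)
    rw [dist_comm b a] at this; linarith

lemma mem_of_signedDist_pos [MetricSpace X] {Ω : Set X} {a : X}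
    (h : 0 < signedDist' Ω a) : a ∈ Ω := by
  by_contra ha
  rw [signedDist', if_neg ha] at h
  linarith [Metric.infDist_nonneg (s := frontier Ω) (x := a)]

lemma signedDist_continuous [MetricSpace X] (hgeo : GeodesicSpace' X) {Ω : Set X}
    (hΩ : IsOpen Ω) : Continuous (signedDist' Ω) := by
  have : LipschitzWith 1 (signedDist' Ω) := by
    refine LipschitzWith.of_dist_le_mul fun a b => ?_
    rw [Real.dist_eq, NNReal.coe_one, one_mul, abs_sub_le_iff]
    constructor
    · linarith [signedDist_sub_le hgeo hΩ a b]
    · linarith [signedDist_sub_le hgeo hΩ b a, dist_comm a b]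
  exact this.continuous

/-- mIGC_ε implies the ε-uniform interior ball condition. -/
theorem mIGC_implies_uniform_ball
    [MetricSpace X] [ProperSpace X] [MeasurableSpace X] [BorelSpace X]
    (μ : Measure X)
    (hfin : ∀ s : Set X, Bornology.IsBounded s → μ s < ⊤)
    (hsupp : ∀ (x : X) (r : ℝ), 0 < r → 0 < μ (Metric.ball x r))
    (hgeo : GeodesicSpace' X) (hnb : NonBranching X)
    (Ω : Set X) (hΩ : IsOpen Ω) (hfr : (frontier Ω).Nonempty)
    (ε : ℝ) (hε : 0 < ε)
    (hTnb : μ (Ω \ Tnb (signedDist' Ω)) = 0)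
    (hmigc : mIGC μ Ω ε) :
    UniformIntBall Ω ε := by
  
  intro x hx
  have h01 : (0:ℝ) ∈ Set.Icc (0:ℝ) 1 := by norm_num
  have h11 : (1:ℝ) ∈ Set.Icc (0:ℝ) 1 := by norm_num
  have claim : ∀ η : ℝ, 0 < η → ∃ p : X, signedDist' Ω p = ε ∧ |dist x p - ε| ≤ η := by
    intro η hη
    set r := min (η / 2) ε with hrdef
    have hr0 : 0 < r := lt_min (by linarith) hε
    have hxcl : x ∈ closure Ω := by
      rw [hΩ.frontier_eq] at hx; exact hx.1
    obtain ⟨y, hyΩ, hyd⟩ := Metric.mem_closure_iff.1 hxcl r hr0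
    set S := Ω ∩ Metric.ball x r with hSdef
    have hSopen : IsOpen S := hΩ.inter Metric.isOpen_ball
    have hyS : y ∈ S := ⟨hyΩ, by rw [Metric.mem_ball, dist_comm]; exact hyd⟩
    have hμS : 0 < μ S := by
      obtain ⟨r', hr', hball⟩ := Metric.isOpen_iff.1 hSopen y hyS
      exact lt_of_lt_of_le (hsupp y r' hr') (measure_mono hball)
    have hScoll : S ⊆ {z | 0 < signedDist' Ω z ∧ signedDist' Ω z < ε} := by
      rintro z ⟨hzΩ, hzb⟩
      have hzx : dist z x < r := Metric.mem_ball.1 hzb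
      constructor
      · rw [signedDist', if_pos hzΩ]
        refine (IsClosed.notMem_iff_infDist_pos isClosed_frontier hfr).1 ?_
        intro hzf
        rw [hΩ.frontier_eq] at hzf; exact hzf.2 hzΩ
      · have h1 := signedDist_sub_le hgeo hΩ z x
        rw [signedDist_frontier hx] at h1
        have : r ≤ ε := min_le_right _ _
        linarith
    have hmeet : (S ∩ Oeps Ω ε).Nonempty := by
      by_contra h
      rw [Set.not_nonempty_iff_eq_empty] at h
      have hsub : S ⊆ {z | 0 < signedDist' Ω z ∧ signedDist' Ω z < ε} \ Oeps Ω ε := by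
        intro z hz
        refine ⟨hScoll hz, fun hzO => ?_⟩
        exact (Set.eq_empty_iff_forall_notMem.1 h z) ⟨hz, hzO⟩
      have := measure_mono (μ := μ) hsub
      rw [hmigc] at this
      exact absurd (le_antisymm this zero_le) hμS.ne'
    obtain ⟨x₀, hx₀S, hx₀Ω, γ, hγ, ⟨t, ht, hγt⟩, hγ0, hγ1, hεD⟩ := hmeet
    set D := dist (γ 0) (γ 1) with hDdef
    have hD : 0 < D := lt_of_lt_of_le hε hεD
    have key : ∀ s ∈ Set.Icc (0:ℝ) 1, signedDist' Ω (γ s) = s * D := by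
      intro s hs
      have hup : signedDist' Ω (γ s) ≤ s * D := by
        have h := signedDist_sub_le hgeo hΩ (γ s) (γ 0)
        rw [signedDist_frontier hγ0] at h
        have hd : dist (γ s) (γ 0) = s * D := by
          rw [hγ s hs 0 h01, sub_zero, abs_of_nonneg hs.1]
        linarith
      have hlow : s * D ≤ signedDist' Ω (γ s) := by
        have h := signedDist_sub_le hgeo hΩ (γ 1) (γ s)
        have hd : dist (γ 1) (γ s) = (1 - s) * D := by
          rw [hγ 1 h11 s hs, abs_of_nonneg (by linarith [hs.2] : (0:ℝ) ≤ 1 - s)]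
        rw [hγ1, hd] at h
        linarith
      linarith
    have hsD : ε / D ∈ Set.Icc (0:ℝ) 1 :=
      ⟨div_nonneg hε.le hD.le, (div_le_one hD).2 hεD⟩
    refine ⟨γ (ε / D), ?_, ?_⟩
    · rw [key _ hsD]; field_simp
    · have hδx₀ : signedDist' Ω x₀ = t * D := by rw [← hγt]; exact key t ht
      have hdx₀ : dist (γ 0) x₀ = t * D := by
        rw [← hγt, hγ 0 h01 t ht, zero_sub, abs_neg, abs_of_nonneg ht.1]
      have hx₀x : dist x₀ x < r := Metric.mem_ball.1 hx₀S.2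
      have hδle : signedDist' Ω x₀ ≤ dist x₀ x := by
        have h := signedDist_sub_le hgeo hΩ x₀ x
        rw [signedDist_frontier hx] at h; linarith
      have hzx : dist (γ 0) x ≤ 2 * r := by
        have := dist_triangle (γ 0) x₀ x
        linarith
      have hrη : 2 * r ≤ η := by
        have : r ≤ η / 2 := min_le_left _ _
        linarith
      have hdp : dist (γ 0) (γ (ε / D)) = ε := by
        rw [hγ 0 h01 _ hsD, zero_sub, abs_neg, abs_of_nonneg hsD.1]
        field_simp
        exact hDdef.symm
      have ht1 := dist_triangle x (γ 0) (γ (ε / D))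
      have ht2 := dist_triangle (γ 0) x (γ (ε / D))
      rw [abs_le]
      rw [dist_comm (γ 0) x] at hzx
      constructor
      · have := dist_comm x (γ 0)
        nlinarith [hzx, hdp, ht2, dist_comm x (γ 0)]
      · nlinarith [hzx, hdp, ht1, dist_comm x (γ 0)]
    
  choose p hp1 hp2 using fun n : ℕ => claim (1 / ((n : ℝ) + 1)) (by positivity)
  have hpball : ∀ n, p n ∈ Metric.closedBall x (ε + 1) := by
    intro n
    rw [Metric.mem_closedBall, dist_comm]
    have h := hp2 n
    rw [abs_le] at h
    have : 1 / ((n : ℝ) + 1) ≤ 1 := by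
      rw [div_le_one (by positivity)]; linarith [Nat.cast_nonneg (α := ℝ) n]
    linarith [h.2]
  obtain ⟨q, _, φ, hφ, hlim⟩ := (isCompact_closedBall x (ε + 1)).tendsto_subseq hpball
  have hδq : signedDist' Ω q = ε := by
    have hc := signedDist_continuous hgeo hΩ
    have h1 : Tendsto (fun k => signedDist' Ω (p (φ k))) atTop (𝓝 (signedDist' Ω q)) :=
      (hc.tendsto q).comp hlim
    have h2 : Tendsto (fun k => signedDist' Ω (p (φ k))) atTop (𝓝 ε) := by
      simp only [hp1]; exact tendsto_const_nhds
    exact tendsto_nhds_unique h1 h2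
  have hdq : dist x q = ε := by
    have h1 : Tendsto (fun k => dist x (p (φ k))) atTop (𝓝 (dist x q)) :=
      Filter.Tendsto.dist tendsto_const_nhds hlim
    have h2 : Tendsto (fun k => dist x (p (φ k))) atTop (𝓝 ε) := by
      have hb : ∀ k : ℕ, |dist x (p (φ k)) - ε| ≤ 1 / ((k : ℝ) + 1) := by
        intro k
        refine le_trans (hp2 (φ k)) ?_
        apply one_div_le_one_div_of_le (by positivity)
        have : k ≤ φ k := hφ.le_apply
        push_cast
        linarith [(Nat.cast_le (α := ℝ)).2 this]
      have h0 : Tendsto (fun k : ℕ => 1 / ((k : ℝ) + 1)) atTop (𝓝 0) :=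
        tendsto_one_div_add_atTop_nhds_zero_nat
      have := squeeze_zero_norm (f := fun k => dist x (p (φ k)) - ε) (fun k => by simpa [Real.norm_eq_abs] using hb k) h0
      have h3 : Tendsto (fun k : ℕ => dist x (p (φ k)) - ε + ε) atTop (𝓝 (0 + ε)) :=
        this.add tendsto_const_nhds
      simpa using h3
    exact tendsto_nhds_unique h1 h2
  refine ⟨ε, le_refl ε, hε, q, ?_, ?_, hdq⟩
  · exact mem_of_signedDist_pos (by rw [hδq]; exact hε)
  · intro z hz
    apply mem_of_signedDist_pos
    have h := signedDist_sub_le hgeo hΩ q z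
    rw [hδq] at h
    have hzq : dist z q < ε := Metric.mem_ball.1 hz
    rw [dist_comm q z] at h
    linarith
end

section
/- Let (X,d,m) be a metric measure space with (X,d) geodesic and with m locally uniformly doubling. Let Ω ⊆ X be open with ∂Ω nonempty and bounded, and assume that every point of ∂Ω verifies the interior ball condition (alternatively, that every point of ∂Ω verifies the exterior ball condition). Then m(∂Ω) = 0. -/
open Metric Set Filter MeasureTheory
open scoped Topology NNReal ENNReal

variable {X : Type*}

private lemma ratio_aux (a b m K : ENNReal) (hKt : K ≠ ⊤) (hK0 : K ≠ 0) (hab : a + b ≤ m)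
    (hm : m ≠ ⊤) (hmb : m ≤ K * b) : a / m ≤ 1 - K⁻¹ := by
  rcases eq_or_ne m 0 with hm0 | hm0
  · have : a = 0 := le_antisymm (hm0 ▸ le_trans (le_add_right le_rfl) hab) zero_le
    simp [this]
  · have hb0 : b ≠ 0 := by
      rintro rfl
      simp only [mul_zero] at hmb
      exact hm0 (le_antisymm hmb zero_le)
    have h1 : K⁻¹ ≤ b / m := by
      rw [ENNReal.le_div_iff_mul_le (Or.inl hm0) (Or.inl hm)]
      calc K⁻¹ * m ≤ K⁻¹ * (K * b) := mul_le_mul_right hmb _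
        _ = (K⁻¹ * K) * b := (mul_assoc _ _ _).symm
        _ = b := by rw [ENNReal.inv_mul_cancel hK0 hKt, one_mul]
    have h2 : a / m + K⁻¹ ≤ 1 := by
      calc a / m + K⁻¹ ≤ a / m + b / m := add_le_add_right h1 _
        _ = (a + b) / m := ENNReal.div_add_div_same
        _ ≤ m / m := ENNReal.div_le_div_right hab m
        _ = 1 := ENNReal.div_self hm0 hm
    exact ENNReal.le_sub_of_add_le_right (by simpa using ENNReal.inv_ne_top.2 hK0) h2

/-- in a geodesic locally uniformly doubling metric measure
space, a bounded boundary satisfying the interior (or exterior) ball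
condition at every point is negligible. -/
theorem boundary_null_of_ball_condition
    [MetricSpace X] [CompleteSpace X] [TopologicalSpace.SeparableSpace X]
    [MeasurableSpace X] [BorelSpace X]
    (μ : Measure X)
    (hfin : ∀ s : Set X, Bornology.IsBounded s → μ s < ⊤)
    (hgeo : GeodesicSpace' X)
    (hdoub : ∀ R : ℝ, 0 < R → ∃ C : NNReal, 0 < C ∧
      ∀ (x : X) (r : ℝ), 0 < r → r ≤ R →
        μ (Metric.ball x (2 * r)) ≤ (C : ENNReal) * μ (Metric.ball x r))
    (Ω : Set X) (hΩ : IsOpen Ω) (hfr : (frontier Ω).Nonempty)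
    (hbd : Bornology.IsBounded (frontier Ω))
    (hball : (∀ x ∈ frontier Ω, ∃ r, IntBallCondAt Ω x r) ∨
             (∀ x ∈ frontier Ω, ExtBallCondAt Ω x)) :
    μ (frontier Ω) = 0 := by
  classical
  haveI : SecondCountableTopology X := UniformSpace.secondCountable_of_separable X
  haveI : IsLocallyFiniteMeasure μ :=
    ⟨fun x => ⟨ball x 1, ball_mem_nhds x one_pos, hfin _ isBounded_ball⟩⟩
  obtain ⟨C, hC0, hC⟩ := hdoub 1 one_pos
  set C' : NNReal := max C 1 with hC'def
  have hC'1 : (1 : NNReal) ≤ C' := le_max_right _ _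
  have hC' : ∀ (x : X) (r : ℝ), 0 < r → r ≤ 1 →
      μ (ball x (2 * r)) ≤ (C' : ENNReal) * μ (ball x r) := fun x r h1 h2 =>
    (hC x r h1 h2).trans (mul_le_mul_left (by exact_mod_cast le_max_left C 1) _)
  set K : ENNReal := ((C' : ENNReal)) ^ 2 with hKdef
  have hK1 : (1 : ENNReal) ≤ K := by
    rw [hKdef]
    calc (1 : ENNReal) = 1 ^ 2 := (one_pow 2).symm
      _ ≤ (C' : ENNReal) ^ 2 := by
          gcongr
          exact_mod_cast hC'1
  have hK0 : K ≠ 0 := by intro h; rw [h] at hK1; exact (not_le.2 zero_lt_one) hK1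
  have hKt : K ≠ ⊤ := by
    rw [hKdef]
    exact ENNReal.pow_ne_top ENNReal.coe_ne_top
  haveI : IsUnifLocDoublingMeasure μ := by
    constructor
    refine ⟨C' ^ 2, ?_⟩
    filter_upwards [Ioc_mem_nhdsGT_of_mem
      (Set.left_mem_Ico.2 (by norm_num : (0:ℝ) < 1/2))] with ε hε x
    have hε0 : 0 < ε := hε.1
    have hε2 : ε ≤ 1/2 := hε.2
    calc μ (closedBall x (2 * ε)) ≤ μ (ball x (2 * (2 * ε))) :=
          measure_mono (closedBall_subset_ball (by linarith))
      _ ≤ (C' : ENNReal) * μ (ball x (2 * ε)) := hC' x (2 * ε) (by linarith) (by linarith)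
      _ ≤ (C' : ENNReal) * ((C' : ENNReal) * μ (ball x ε)) :=
          mul_le_mul_right (hC' x ε hε0 (by linarith)) _
      _ = ((C' ^ 2 : NNReal) : ENNReal) * μ (ball x ε) := by
          push_cast; ring
      _ ≤ ((C' ^ 2 : NNReal) : ENNReal) * μ (closedBall x ε) :=
          mul_le_mul_right (measure_mono ball_subset_closedBall) _
  set S := frontier Ω with hSdef
  have hSmeas : MeasurableSet S := isClosed_frontier.measurableSet
  -- porosity data at each boundary point
  have hpor : ∀ x ∈ S, ∃ r > (0:ℝ), ∃ p : X, dist x p = r ∧ Disjoint (ball p r) S := by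
    intro x hx
    rcases hball with hint | hext
    · obtain ⟨r, hr0, p, hpΩ, hsub, hdxp⟩ := hint x hx
      refine ⟨r, hr0, p, hdxp, ?_⟩
      refine Set.disjoint_left.2 fun z hz hzS => ?_
      rw [hSdef, hΩ.frontier_eq] at hzS
      exact hzS.2 (hsub hz)
    · obtain ⟨q, hq, r, hr0, hsub, hdxq⟩ := hext x hx
      refine ⟨r, hr0, q, hdxq, ?_⟩
      refine Set.disjoint_left.2 fun z hz hzS => ?_
      exact (hsub hz) (frontier_subset_closure hzS)
  -- ratio bound at every boundary point, at every small scale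
  have hratio : ∀ x ∈ S, ∀ᶠ t in 𝓝[>] (0:ℝ),
      μ (S ∩ closedBall x (2 * t)) / μ (closedBall x (2 * t)) ≤ 1 - K⁻¹ := by
    intro x hx
    obtain ⟨r, hr0, p, hdxp, hdisj⟩ := hpor x hx
    have hmin : (0:ℝ) < min r (1/2) := lt_min hr0 (by norm_num)
    filter_upwards [Ioc_mem_nhdsGT_of_mem (Set.left_mem_Ico.2 hmin)] with t ht
    have ht0 : 0 < t := ht.1
    have htr : t ≤ r := ht.2.trans (min_le_left _ _)
    have ht2 : t ≤ 1/2 := ht.2.trans (min_le_right _ _)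
    obtain ⟨γ, hγ, hγ0, hγ1⟩ := hgeo x p
    set y := γ (t / r) with hydef
    have hd01 : dist (γ 0) (γ 1) = r := by rw [hγ0, hγ1, hdxp]
    have htr01 : t / r ∈ Set.Icc (0:ℝ) 1 := ⟨by positivity, by
      rw [div_le_one hr0]; exact htr⟩
    have hdyx : dist y x = t := by
      rw [hydef, ← hγ0]
      rw [hγ (t / r) htr01 0 (Set.left_mem_Icc.2 zero_le_one), hd01]
      rw [sub_zero, abs_of_nonneg (by positivity)]
      field_simp
    have hdyp : dist y p = r - t := by
      rw [hydef, ← hγ1]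
      rw [hγ (t / r) htr01 1 (Set.right_mem_Icc.2 zero_le_one), hd01]
      rw [abs_of_nonpos (by rw [sub_nonpos, div_le_one hr0]; exact htr)]
      field_simp
      ring
    -- ball y t avoids S
    have hyS : Disjoint (ball y t) S := by
      refine Set.disjoint_left.2 fun z hz => Set.disjoint_left.1 hdisj ?_
      have : dist z p ≤ dist z y + dist y p := dist_triangle _ _ _
      exact mem_ball.2 (by rw [mem_ball] at hz; rw [hdyp] at this; linarith)
    -- ball y t inside closedBall x (2t)
    have hy_in : ball y t ⊆ closedBall x (2 * t) := fun z hz => by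
      rw [mem_ball] at hz
      have h1 : dist z x ≤ dist z y + dist y x := dist_triangle _ _ _
      rw [mem_closedBall]; rw [hdyx] at h1; linarith
    -- closedBall x (2t) inside ball y (4t)
    have hx_in : closedBall x (2 * t) ⊆ ball y (2 * (2 * t)) := fun z hz => by
      rw [mem_closedBall] at hz
      have h1 : dist z y ≤ dist z x + dist x y := dist_triangle _ _ _
      rw [dist_comm x y, hdyx] at h1
      rw [mem_ball]; linarith
    -- doubling chain
    have hchain : μ (closedBall x (2 * t)) ≤ K * μ (ball y t) := by
      calc μ (closedBall x (2 * t)) ≤ μ (ball y (2 * (2 * t))) := measure_mono hx_in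
        _ ≤ (C' : ENNReal) * μ (ball y (2 * t)) := hC' y (2 * t) (by linarith) (by linarith)
        _ ≤ (C' : ENNReal) * ((C' : ENNReal) * μ (ball y t)) :=
            mul_le_mul_right (hC' y t ht0 (by linarith)) _
        _ = K * μ (ball y t) := by rw [hKdef]; ring
    have hsum : μ (S ∩ closedBall x (2 * t)) + μ (ball y t) ≤ μ (closedBall x (2 * t)) := by
      have hdisj2 : Disjoint (S ∩ closedBall x (2 * t)) (ball y t) :=
        (hyS.symm.mono_left Set.inter_subset_left)
      rw [← measure_union hdisj2 isOpen_ball.measurableSet]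
      exact measure_mono (Set.union_subset (Set.inter_subset_right) hy_in)
    exact ratio_aux _ _ _ K hKt hK0 hsum
      (hfin _ (isBounded_closedBall)).ne hchain
  -- Lebesgue density theorem
  have hdens := IsUnifLocDoublingMeasure.ae_tendsto_measure_inter_div μ S 1
  have hnull : ∀ᵐ x ∂μ.restrict S, x ∉ S := by
    filter_upwards [hdens] with x hx hxS
    -- choose a sequence tₙ → 0⁺
    obtain ⟨u, hu_tend⟩ := exists_seq_tendsto (𝓝[>] (0:ℝ))
    have hu_pos : ∀ᶠ n in atTop, u n ∈ Set.Ioi (0:ℝ) :=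
      hu_tend.eventually eventually_mem_nhdsWithin
    have hδ : Tendsto (fun n => 2 * u n) atTop (𝓝[>] (0:ℝ)) := by
      refine tendsto_nhdsWithin_iff.2 ⟨?_, ?_⟩
      · have := hu_tend.mono_right nhdsWithin_le_nhds
        simpa using (this.const_mul (2:ℝ))
      · filter_upwards [hu_pos] with n hn
        have hn' : 0 < u n := hn
        exact Set.mem_Ioi.2 (by positivity)
    have hmem : ∀ᶠ n in atTop, x ∈ closedBall ((fun _ => x) n) (1 * (2 * u n)) := by
      filter_upwards [hu_pos] with n hn
      have hn' : 0 < u n := hn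
      exact mem_closedBall_self (by simp only [one_mul]; positivity)
    have htend := hx (fun _ => x) (fun n => 2 * u n) hδ hmem
    -- but the ratio is bounded away from 1
    have hbound := hratio x hxS
    have hev : ∀ᶠ n in atTop,
        μ (S ∩ closedBall x (2 * u n)) / μ (closedBall x (2 * u n)) ≤ 1 - K⁻¹ :=
      hu_tend.eventually hbound
    have hle : (1 : ENNReal) ≤ 1 - K⁻¹ :=
      le_of_tendsto htend hev
    have hlt : (1 : ENNReal) - K⁻¹ < 1 :=
      ENNReal.sub_lt_self ENNReal.one_ne_top one_ne_zero (ENNReal.inv_ne_zero.2 hKt)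
    exact absurd hle (not_le.2 hlt)
  have : μ.restrict S S = 0 := by
    rw [ae_iff] at hnull
    simpa using hnull
  rwa [Measure.restrict_apply_self] at this
end

section
/- Let (X,d) be a geodesic non-branching metric space and let u : X → ℝ be 1-Lipschitz. Then the forward branching set is contained in the set of initial points and the backward branching set is contained in the set of final points: A⁺ ⊆ a and A⁻ ⊆ b. -/
open Metric Set Filter MeasureTheory

variable {X : Type*}

/-- The set of initial points of the transport set. -/
def initialPts [MetricSpace X] (u : X → ℝ) : Set X :=
  {x ∈ Tu u | ¬ ∃ y ∈ Tu u, y ≠ x ∧ (y, x) ∈ Gamma u}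

/-- The set of final points of the transport set. -/
def finalPts [MetricSpace X] (u : X → ℝ) : Set X :=
  {x ∈ Tu u | ¬ ∃ y ∈ Tu u, y ≠ x ∧ (x, y) ∈ Gamma u}

section Aux

variable [MetricSpace X]

lemma lip_sub_le {u : X → ℝ} (hu : LipschitzWith 1 u) (x y : X) :
    u x - u y ≤ dist x y := by
  have h := hu.dist_le_mul x y
  simp only [NNReal.coe_one, one_mul] at h
  calc u x - u y ≤ |u x - u y| := le_abs_self _
    _ = dist (u x) (u y) := (Real.dist_eq _ _).symm
    _ ≤ dist x y := h

lemma geo_dist {g : ℝ → X} (hg : IsGeodesic g) {s t : ℝ}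
    (hs : s ∈ Set.Icc (0:ℝ) 1) (ht : t ∈ Set.Icc (0:ℝ) 1) (hst : s ≤ t) :
    dist (g s) (g t) = (t - s) * dist (g 0) (g 1) := by
  have := hg s hs t ht
  rwa [abs_of_nonpos (by linarith), neg_sub] at this

lemma u_along {u : X → ℝ} (hu : LipschitzWith 1 u) {p q : X}
    (hpq : (p, q) ∈ Gamma u) {g : ℝ → X} (hg : IsGeodesic g)
    (h0 : g 0 = p) (h1 : g 1 = q) {r : ℝ} (hr : r ∈ Set.Icc (0:ℝ) 1) :
    u (g r) = u p - r * dist p q := by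
  have h01 : (0:ℝ) ∈ Set.Icc (0:ℝ) 1 := ⟨le_refl _, zero_le_one⟩
  have h11 : (1:ℝ) ∈ Set.Icc (0:ℝ) 1 := ⟨zero_le_one, le_refl _⟩
  have d1 : dist p (g r) = r * dist p q := by
    have := geo_dist hg h01 hr hr.1
    rw [h0, h1] at this
    simpa using this
  have d2 : dist (g r) q = (1 - r) * dist p q := by
    have := geo_dist hg hr h11 hr.2
    rw [h0, h1] at this
    exact this
  have e1 := lip_sub_le hu p (g r)
  have e2 := lip_sub_le hu (g r) q
  have hpq' : u p - u q = dist p q := hpq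
  rw [d1] at e1
  rw [d2] at e2
  linarith

/-- Concatenation of two geodesics along a `Γ_u`-chain is a geodesic. -/
lemma concat_geodesic {u : X → ℝ} (hu : LipschitzWith 1 u) {w x p : X}
    (hwx : (w, x) ∈ Gamma u) (hxp : (x, p) ∈ Gamma u)
    (ha : 0 < dist w x) (hb : 0 < dist x p)
    {g0 g : ℝ → X} (hg0 : IsGeodesic g0) (hg : IsGeodesic g)
    (h00 : g0 0 = w) (h01 : g0 1 = x) (h10 : g 0 = x) (h11 : g 1 = p) :
    IsGeodesic (fun s => if s * (dist w x + dist x p) ≤ dist w x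
      then g0 (s * (dist w x + dist x p) / dist w x)
      else g ((s * (dist w x + dist x p) - dist w x) / dist x p))
    ∧ (fun s => if s * (dist w x + dist x p) ≤ dist w x
      then g0 (s * (dist w x + dist x p) / dist w x)
      else g ((s * (dist w x + dist x p) - dist w x) / dist x p)) 0 = w
    ∧ (fun s => if s * (dist w x + dist x p) ≤ dist w x
      then g0 (s * (dist w x + dist x p) / dist w x)
      else g ((s * (dist w x + dist x p) - dist w x) / dist x p)) 1 = p := by
  set a := dist w x with ha_def
  set b := dist x p with hb_def
  set L := a + b with hL_def
  have hL : 0 < L := by positivity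
  set f : ℝ → X := fun s => if s * L ≤ a
      then g0 (s * L / a) else g ((s * L - a) / b) with hf_def
  have hwx' : u w - u x = a := hwx
  have hxp' : u x - u p = b := hxp
  -- distance on g0 against x
  have hdg0 : ∀ r ∈ Set.Icc (0:ℝ) 1, dist (g0 r) x = (1 - r) * a := by
    intro r hr
    have := geo_dist hg0 hr ⟨zero_le_one, le_refl _⟩ hr.2
    rw [h00, h01] at this
    exact this
  have hdg : ∀ r ∈ Set.Icc (0:ℝ) 1, dist x (g r) = r * b := by
    intro r hr
    have := geo_dist hg ⟨le_refl _, zero_le_one⟩ hr hr.1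
    rw [h10, h11] at this
    simpa using this
  -- cross distance
  have cross : ∀ r ∈ Set.Icc (0:ℝ) 1, ∀ r' ∈ Set.Icc (0:ℝ) 1,
      dist (g0 r) (g r') = (1 - r) * a + r' * b := by
    intro r hr r' hr'
    have hub : dist (g0 r) (g r') ≤ (1 - r) * a + r' * b := by
      calc dist (g0 r) (g r') ≤ dist (g0 r) x + dist x (g r') := dist_triangle _ _ _
        _ = (1 - r) * a + r' * b := by rw [hdg0 r hr, hdg r' hr']
    have hu1 : u (g0 r) = u w - r * a := u_along hu hwx hg0 h00 h01 hr
    have hu2 : u (g r') = u x - r' * b := u_along hu hxp hg h10 h11 hr'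
    have hlb := lip_sub_le hu (g0 r) (g r')
    rw [hu1, hu2] at hlb
    have : (1 - r) * a + r' * b ≤ dist (g0 r) (g r') := by linarith
    linarith
  have hf0 : f 0 = w := by
    have hc : (0:ℝ) * L ≤ a := by simpa using ha.le
    simp only [hf_def, if_pos hc]
    rw [show (0:ℝ) * L / a = 0 by ring, h00]
  have hf1 : f 1 = p := by
    have hc : ¬ ((1:ℝ) * L ≤ a) := by
      rw [one_mul]; simp only [hL_def]; linarith
    simp only [hf_def, if_neg hc]
    rw [show (1:ℝ) * L - a = b by rw [hL_def]; ring, div_self hb.ne', h11]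
  have hdfp : dist w p = L := by
    have := cross 0 ⟨le_refl _, zero_le_one⟩ 1 ⟨zero_le_one, le_refl _⟩
    rw [h00, h11] at this
    simpa [hL_def] using this
  -- ordered claim
  have key : ∀ s ∈ Set.Icc (0:ℝ) 1, ∀ t ∈ Set.Icc (0:ℝ) 1, s ≤ t →
      dist (f s) (f t) = (t - s) * L := by
    intro s hs t ht hst
    have hsL : 0 ≤ s * L := mul_nonneg hs.1 hL.le
    have htL : 0 ≤ t * L := mul_nonneg ht.1 hL.le
    have hstL : s * L ≤ t * L := mul_le_mul_of_nonneg_right hst hL.le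
    by_cases hsa : s * L ≤ a
    · by_cases hta : t * L ≤ a
      · -- both on g0
        have hfs : f s = g0 (s * L / a) := if_pos hsa
        have hft : f t = g0 (t * L / a) := if_pos hta
        have hsr : s * L / a ∈ Set.Icc (0:ℝ) 1 :=
          ⟨div_nonneg hsL ha.le, (div_le_one ha).2 hsa⟩
        have htr : t * L / a ∈ Set.Icc (0:ℝ) 1 :=
          ⟨div_nonneg htL ha.le, (div_le_one ha).2 hta⟩
        rw [hfs, hft, geo_dist hg0 hsr htr (by gcongr), h00, h01]
        field_simp
        ring
      · -- s on g0, t on g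
        have hfs : f s = g0 (s * L / a) := if_pos hsa
        have hft : f t = g ((t * L - a) / b) := if_neg hta
        have hsr : s * L / a ∈ Set.Icc (0:ℝ) 1 :=
          ⟨div_nonneg hsL ha.le, (div_le_one ha).2 hsa⟩
        have htb : t * L ≤ L := by
          calc t * L ≤ 1 * L := mul_le_mul_of_nonneg_right ht.2 hL.le
            _ = L := one_mul _
        have htr : (t * L - a) / b ∈ Set.Icc (0:ℝ) 1 := by
          constructor
          · apply div_nonneg _ hb.le; linarith [not_le.1 hta]
          · rw [div_le_one hb]; simp only [hL_def] at htb ⊢; linarith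
        rw [hfs, hft, cross _ hsr _ htr]
        field_simp
        ring
    · -- both on g
      have hta : ¬ (t * L ≤ a) := fun h => hsa (hstL.trans h)
      have hfs : f s = g ((s * L - a) / b) := if_neg hsa
      have hft : f t = g ((t * L - a) / b) := if_neg hta
      have hsb : s * L ≤ L := by
        calc s * L ≤ 1 * L := mul_le_mul_of_nonneg_right hs.2 hL.le
          _ = L := one_mul _
      have htb : t * L ≤ L := by
        calc t * L ≤ 1 * L := mul_le_mul_of_nonneg_right ht.2 hL.le
          _ = L := one_mul _
      have hsr : (s * L - a) / b ∈ Set.Icc (0:ℝ) 1 := by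
        constructor
        · apply div_nonneg _ hb.le; linarith [not_le.1 hsa]
        · rw [div_le_one hb]; simp only [hL_def] at hsb ⊢; linarith
      have htr : (t * L - a) / b ∈ Set.Icc (0:ℝ) 1 := by
        constructor
        · apply div_nonneg _ hb.le; linarith [not_le.1 hta]
        · rw [div_le_one hb]; simp only [hL_def] at htb ⊢; linarith
      have hle : (s * L - a) / b ≤ (t * L - a) / b := by gcongr
      rw [hfs, hft, geo_dist hg hsr htr hle, h10, h11]
      field_simp
      ring
  refine ⟨?_, hf0, hf1⟩
  intro s hs t ht
  have hend : dist (f 0) (f 1) = L := by rw [hf0, hf1]; exact hdfp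
  rcases le_total s t with h | h
  · rw [key s hs t ht h, hend, abs_of_nonpos (by linarith), neg_sub]
  · rw [dist_comm, key t ht s hs h, hend, abs_of_nonneg (by linarith)]

lemma ru_symm {u : X → ℝ} {p q : X} (h : (p, q) ∈ Ru u) : (q, p) ∈ Ru u := by
  rcases h with h | h
  · exact Or.inr h
  · exact Or.inl h

lemma not_branch {u : X → ℝ} (hu : LipschitzWith 1 u)
    (hgeo : GeodesicSpace' X) (hnb : NonBranching X)
    {w x y z : X} (hwG : (w, x) ∈ Gamma u) (hw : w ≠ x)
    (hxy : (x, y) ∈ Gamma u) (hxz : (x, z) ∈ Gamma u)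
    (hbc : dist x y ≤ dist x z) : (y, z) ∈ Ru u := by
  by_cases hy : y = x
  · subst hy; exact Or.inl hxz
  by_cases hz : z = x
  · subst hz; exact Or.inr hxy
  have ha : 0 < dist w x := dist_pos.2 hw
  have hb : 0 < dist x y := dist_pos.2 (fun h => hy h.symm)
  have hc : 0 < dist x z := dist_pos.2 (fun h => hz h.symm)
  obtain ⟨g0, hg0, h00, h01⟩ := hgeo w x
  obtain ⟨g1, hg1, h10, h11⟩ := hgeo x y
  obtain ⟨g2, hg2, h20, h21⟩ := hgeo x z
  set r₀ := dist x y / dist x z with hr₀_def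
  have hr₀0 : 0 < r₀ := div_pos hb hc
  have hr₀1 : r₀ ≤ 1 := (div_le_one hc).2 hbc
  have hr₀m : r₀ ∈ Set.Icc (0:ℝ) 1 := ⟨hr₀0.le, hr₀1⟩
  set z' := g2 r₀ with hz'_def
  have hdxz' : dist x z' = dist x y := by
    have := geo_dist hg2 ⟨le_refl _, zero_le_one⟩ hr₀m hr₀0.le
    rw [h20, h21] at this
    simp only [hz'_def]
    rw [this]
    simp [hr₀_def]
    field_simp
  have huz' : u z' = u x - dist x y := by
    have := u_along hu hxz hg2 h20 h21 hr₀m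
    rw [hz'_def, this, hr₀_def]
    field_simp
  have hxz' : (x, z') ∈ Gamma u := by
    show u x - u z' = dist x z'
    rw [huz', hdxz']; ring
  have hdz'z : dist z' z = dist x z - dist x y := by
    have h3 := geo_dist hg2 hr₀m ⟨zero_le_one, le_refl _⟩ hr₀1
    rw [h20, h21] at h3
    rw [hz'_def, h3, hr₀_def]
    field_simp
  have hz'z : (z', z) ∈ Gamma u := by
    show u z' - u z = dist z' z
    have hxz'' : u x - u z = dist x z := hxz
    rw [huz', hdz'z]; linarith
  -- reparametrized geodesic from x to z'
  set g' : ℝ → X := fun r => g2 (r * r₀) with hg'_def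
  have hg'0 : g' 0 = x := by simp [hg'_def, h20]
  have hg'1 : g' 1 = z' := by simp [hg'_def, hz'_def]
  have hg' : IsGeodesic g' := by
    intro s hs t ht
    have hsm : s * r₀ ∈ Set.Icc (0:ℝ) 1 := by
      constructor
      · exact mul_nonneg hs.1 hr₀0.le
      · have := mul_le_mul hs.2 hr₀1 hr₀0.le zero_le_one
        linarith
    have htm : t * r₀ ∈ Set.Icc (0:ℝ) 1 := by
      constructor
      · exact mul_nonneg ht.1 hr₀0.le
      · have := mul_le_mul ht.2 hr₀1 hr₀0.le zero_le_one
        linarith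
    have h2 := hg2 (s * r₀) hsm (t * r₀) htm
    rw [h20, h21] at h2
    have hend : dist (g' 0) (g' 1) = dist x y := by rw [hg'0, hg'1, hdxz']
    simp only [hg'_def]
    rw [h2, hend, show s * r₀ - t * r₀ = (s - t) * r₀ by ring, abs_mul,
      abs_of_nonneg hr₀0.le, hr₀_def]
    field_simp
  have hbz' : 0 < dist x z' := by rw [hdxz']; exact hb
  obtain ⟨hγ₁, hγ₁0, hγ₁1⟩ := concat_geodesic hu hwG hxy ha hb hg0 hg1 h00 h01 h10 h11
  obtain ⟨hγ₂, hγ₂0, hγ₂1⟩ := concat_geodesic hu hwG hxz' ha hbz' hg0 hg' h00 h01 hg'0 hg'1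
  rw [hdxz'] at hγ₂ hγ₂0 hγ₂1
  have hL : 0 < dist w x + dist x y := by positivity
  have ht₀ : dist w x / (dist w x + dist x y) ∈ Set.Ioo (0:ℝ) 1 := by
    constructor
    · exact div_pos ha hL
    · rw [div_lt_one hL]; linarith
  -- the two concatenations agree on [0, t₀]
  have hagree : ∀ s ∈ Set.Icc (0:ℝ) (dist w x / (dist w x + dist x y)),
      (fun s => if s * (dist w x + dist x y) ≤ dist w x
        then g0 (s * (dist w x + dist x y) / dist w x)
        else g1 ((s * (dist w x + dist x y) - dist w x) / dist x y)) s
      = (fun s => if s * (dist w x + dist x y) ≤ dist w x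
        then g0 (s * (dist w x + dist x y) / dist w x)
        else g' ((s * (dist w x + dist x y) - dist w x) / dist x y)) s := by
    intro s hs
    have hcond : s * (dist w x + dist x y) ≤ dist w x := by
      have h2 : s ≤ dist w x / (dist w x + dist x y) := hs.2
      rw [le_div_iff₀ hL] at h2
      exact h2
    simp only [if_pos hcond]
  have hfin := hnb _ _ hγ₁ hγ₂ _ ht₀ hagree 1 ⟨zero_le_one, le_refl _⟩
  have hyz' : y = z' := by rw [← hγ₁1, ← hγ₂1]; exact hfin
  rw [hyz']
  exact Or.inl hz'z

lemma aplus_sub {u : X → ℝ} (hgeo : GeodesicSpace' X) (hnb : NonBranching X)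
    (hu : LipschitzWith 1 u) : Aplus u ⊆ initialPts u := by
  rintro x ⟨hxT, y, z, hxy, hxz, hyz⟩
  refine ⟨hxT, ?_⟩
  rintro ⟨w, hwT, hwx, hwG⟩
  rcases le_total (dist x y) (dist x z) with h | h
  · exact hyz (not_branch hu hgeo hnb hwG hwx hxy hxz h)
  · exact hyz (ru_symm (not_branch hu hgeo hnb hwG hwx hxz hxy h))

lemma gamma_neg {u : X → ℝ} (p q : X) :
    (p, q) ∈ Gamma (fun t => -u t) ↔ (q, p) ∈ Gamma u := by
  simp only [Gamma, Set.mem_setOf_eq]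
  rw [dist_comm]
  constructor <;> intro h <;> linarith

lemma ru_neg {u : X → ℝ} (p q : X) :
    (p, q) ∈ Ru (fun t => -u t) ↔ (p, q) ∈ Ru u := by
  simp only [Ru, Set.mem_union, Set.mem_setOf_eq, gamma_neg]
  tauto

lemma tu_neg {u : X → ℝ} : Tu (fun t => -u t) = Tu u := by
  ext x
  simp only [Tu, Set.mem_setOf_eq, ru_neg]

end Aux

/-- in a geodesic non-branching space, the forward branching set
is contained in the set of initial points and the backward branching set in
the set of final points. -/
theorem branching_subset_initial_final
    [MetricSpace X] (hgeo : GeodesicSpace' X) (hnb : NonBranching X)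
    (u : X → ℝ) (hu : LipschitzWith 1 u) :
    Aplus u ⊆ initialPts u ∧ Aminus u ⊆ finalPts u := by
  constructor
  · exact aplus_sub hgeo hnb hu
  · have hnu : LipschitzWith 1 (fun t => -u t) := by
      intro p q
      simpa [edist_dist, Real.dist_eq, abs_sub_comm, neg_sub] using hu p q
    have hsub := aplus_sub hgeo hnb hnu
    intro x hx
    have hx' : x ∈ Aplus (fun t => -u t) := by
      obtain ⟨hxT, y, z, hyx, hzx, hyz⟩ := hx
      refine ⟨by rwa [tu_neg], y, z, (gamma_neg x y).2 hyx, (gamma_neg x z).2 hzx, ?_⟩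
      rw [ru_neg]
      exact hyz
    have := hsub hx'
    obtain ⟨hxT, hni⟩ := this
    refine ⟨by rwa [tu_neg] at hxT, ?_⟩
    rintro ⟨w, hwT, hwx, hwG⟩
    exact hni ⟨w, by rwa [tu_neg], hwx, (gamma_neg w x).2 hwG⟩
end

section
/- Let (X,d,m) be a metric measure space, let Ω ⊆ X be open, and let f : Ω → ℝ be Lipschitz with support (the closure of {f ≠ 0}) compact and contained in Ω. Let g : X → ℝ be the extension of f by zero outside Ω. Then ∫_Ω f² dm = ∫_X g² dm and Ch_Ω(f) = Ch_X(g); in particular, the zero-extension operator preserves the W^{1,2}-norm ‖f‖² = ‖f‖²_{L²} + 2Ch(f) on Lipschitz functions with compact support in Ω. -/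
open Metric Set Filter MeasureTheory

variable {X : Type*}

/-- The slope of `f` at `x` relative to the set `U`. -/
noncomputable def slopeOn [MetricSpace X] (U : Set X) (f : X → ℝ) (x : X) : ℝ :=
  Filter.limsup (fun y => |f x - f y| / dist x y) (nhdsWithin x (U \ {x}))

/-- `f` is locally Lipschitz on `U`. -/
def LocLipschitzOn [MetricSpace X] (U : Set X) (f : X → ℝ) : Prop :=
  ∀ x ∈ U, ∃ K : NNReal, ∃ t ∈ nhdsWithin x U, LipschitzOnWith K f t

/-- The Cheeger energy of `f` on the open set `U`, defined by relaxation of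
`(1/2)∫_U (lip f_n)² dm` along sequences of locally Lipschitz functions
converging to `f` in `L²(U, m)`. -/
noncomputable def cheegerEnergy [MetricSpace X] [MeasurableSpace X]
    (μ : Measure X) (U : Set X) (f : X → ℝ) : ENNReal :=
  ⨅ (F : ℕ → X → ℝ) (_ : ∀ n, LocLipschitzOn U (F n))
    (_ : Filter.Tendsto
      (fun n => ∫⁻ x in U, ENNReal.ofReal ((F n x - f x) ^ 2) ∂μ)
      Filter.atTop (nhds 0)),
    Filter.liminf
      (fun n => (∫⁻ x in U, ENNReal.ofReal ((slopeOn U (F n) x) ^ 2) ∂μ) / 2)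
      Filter.atTop


section ZEHelpers
open scoped ENNReal NNReal

set_option linter.unusedSectionVars false
set_option maxHeartbeats 2000000

variable [MetricSpace X]

lemma real_limsup_bot (u : X → ℝ) : Filter.limsup u ⊥ = 0 := by
  rw [Filter.limsup_eq]
  have : {a : ℝ | ∀ᶠ n in (⊥ : Filter X), u n ≤ a} = Set.univ := by
    ext a; simp
  rw [this, csInf_of_not_bddBelow (not_bddBelow_univ), Real.sInf_empty]

lemma slopeOn_nonneg (U : Set X) (g : X → ℝ) (x : X) : 0 ≤ slopeOn U g x := by
  rw [slopeOn]
  set l := nhdsWithin x (U \ {x}) with hl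
  rcases eq_or_ne l ⊥ with h | h
  · rw [h, real_limsup_bot]
  · haveI : l.NeBot := ⟨h⟩
    rw [Filter.limsup_eq]
    by_cases hs : {a : ℝ | ∀ᶠ y in l, |g x - g y| / dist x y ≤ a}.Nonempty
    · refine le_csInf hs fun a ha => ?_
      have ha' : ∀ᶠ y in l, |g x - g y| / dist x y ≤ a := ha
      obtain ⟨y, hy⟩ := ha'.exists
      exact le_trans (div_nonneg (abs_nonneg _) dist_nonneg) hy
    · rw [Set.not_nonempty_iff_eq_empty.1 hs, Real.sInf_empty]

lemma nhdsWithin_univ_diff_eq {Ω : Set X} (hΩ : IsOpen Ω) {x : X} (hx : x ∈ Ω) :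
    nhdsWithin x (Set.univ \ {x}) = nhdsWithin x (Ω \ {x}) := by
  rw [nhdsWithin_restrict' (Set.univ \ {x}) (hΩ.mem_nhds hx)]
  congr 1
  ext y; simp [and_comm]

lemma slopeOn_univ_eq {Ω : Set X} (hΩ : IsOpen Ω) {x : X} (hx : x ∈ Ω) (g : X → ℝ) :
    slopeOn Set.univ g x = slopeOn Ω g x := by
  rw [slopeOn, slopeOn, nhdsWithin_univ_diff_eq hΩ hx]

lemma eventually_ball_slope {U : Set X} {x : X} {r : ℝ} (hr : 0 < r) :
    ∀ᶠ y in nhdsWithin x (U \ {x}), y ∈ ball x r :=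
  mem_nhdsWithin_of_mem_nhds (ball_mem_nhds x hr)

lemma slopeOn_congr_ball {U : Set X} {x : X} {r : ℝ} (hr : 0 < r) {g h : X → ℝ}
    (hgh : ∀ y ∈ ball x r, g y = h y) : slopeOn U g x = slopeOn U h x := by
  rw [slopeOn, slopeOn]
  refine Filter.limsup_congr ?_
  filter_upwards [eventually_ball_slope hr] with y hy
  rw [hgh y hy, hgh x (mem_ball_self hr)]

lemma slopeOn_zero_of_ball {U : Set X} {x : X} {r : ℝ} (hr : 0 < r) {g : X → ℝ}
    (hg : ∀ y ∈ ball x r, g y = 0) : slopeOn U g x = 0 := by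
  rw [slopeOn_congr_ball hr hg]
  rw [slopeOn]
  rcases eq_or_ne (nhdsWithin x (U \ {x})) ⊥ with h | h
  · rw [h, real_limsup_bot]
  · haveI : (nhdsWithin x (U \ {x})).NeBot := ⟨h⟩
    have hc : Filter.limsup (fun y => |(fun _ : X => (0:ℝ)) x - (fun _ : X => (0:ℝ)) y| / dist x y) (nhdsWithin x (U \ {x})) = Filter.limsup (fun _ => (0:ℝ)) (nhdsWithin x (U \ {x})) := by
      refine Filter.limsup_congr ?_
      filter_upwards with y; simp
    rw [hc, Filter.limsup_const]

lemma slopeOn_mul_le {Ω : Set X} (hΩ : IsOpen Ω) {x : X} (hx : x ∈ Ω) {F χ : X → ℝ}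
    (hχ0 : ∀ y, 0 ≤ χ y) (hχ1 : ∀ y, χ y ≤ 1) {L : ℝ} (hL : 0 ≤ L)
    (hχL : ∀ y z, |χ y - χ z| ≤ L * dist y z)
    (hF : ∃ K : NNReal, ∃ t ∈ nhdsWithin x Ω, LipschitzOnWith K F t) :
    slopeOn Ω (fun y => χ y * F y) x ≤ slopeOn Ω F x + L * |F x| := by
  have hRnn : 0 ≤ slopeOn Ω F x + L * |F x| :=
    add_nonneg (slopeOn_nonneg _ _ _) (mul_nonneg hL (abs_nonneg _))
  set l := nhdsWithin x (Ω \ {x}) with hldef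
  -- pointwise bound on the quotients
  have hq : ∀ y, y ≠ x →
      |χ x * F x - χ y * F y| / dist x y ≤ |F x - F y| / dist x y + L * |F x| := by
    intro y hy
    have hd : 0 < dist x y := dist_pos.2 (fun h => hy h.symm)
    have h1 : |χ x * F x - χ y * F y| ≤ |F x - F y| + |F x| * (L * dist x y) := by
      have : χ x * F x - χ y * F y = χ y * (F x - F y) + F x * (χ x - χ y) := by ring
      rw [this]
      refine (abs_add_le _ _).trans (add_le_add ?_ ?_)
      · calc |χ y * (F x - F y)| = |χ y| * |F x - F y| := abs_mul _ _
          _ ≤ 1 * |F x - F y| := by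
              gcongr; rw [abs_of_nonneg (hχ0 y)]; exact hχ1 y
          _ = |F x - F y| := one_mul _
      · calc |F x * (χ x - χ y)| = |F x| * |χ x - χ y| := abs_mul _ _
          _ ≤ |F x| * (L * dist x y) := by gcongr; exact hχL x y
    calc |χ x * F x - χ y * F y| / dist x y
        ≤ (|F x - F y| + |F x| * (L * dist x y)) / dist x y := by gcongr
      _ = |F x - F y| / dist x y + L * |F x| := by field_simp
  rcases eq_or_ne l ⊥ with h | h
  · rw [slopeOn, ← hldef, h, real_limsup_bot]; exact hRnn
  haveI : l.NeBot := ⟨h⟩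
  obtain ⟨K, t, ht, hKt⟩ := hF
  rw [hΩ.nhdsWithin_eq hx] at ht
  have hxt : x ∈ t := mem_of_mem_nhds ht
  have hne : ∀ᶠ y in l, y ∈ Ω \ {x} := eventually_mem_nhdsWithin
  have htl : ∀ᶠ y in l, y ∈ t :=
    mem_nhdsWithin_of_mem_nhds ht
  -- quotient for F is eventually bounded by K
  have hbd : ∀ᶠ y in l, |F x - F y| / dist x y ≤ (K : ℝ) := by
    filter_upwards [htl, hne] with y hyt hyne
    have hd : 0 < dist x y := dist_pos.2 (fun hh => hyne.2 (by simp [hh.symm]))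
    rw [div_le_iff₀ hd]
    exact hKt.dist_le_mul x hxt y hyt
  have hbdd : Filter.IsBoundedUnder (· ≤ ·) l (fun y => |F x - F y| / dist x y) :=
    ⟨(K : ℝ), by simpa using hbd⟩
  -- conclude
  have key : ∀ η : ℝ, 0 < η → slopeOn Ω (fun y => χ y * F y) x ≤ slopeOn Ω F x + L * |F x| + η := by
    intro η hη
    have hlt : Filter.limsup (fun y => |F x - F y| / dist x y) l < slopeOn Ω F x + η := by
      have : slopeOn Ω F x = Filter.limsup (fun y => |F x - F y| / dist x y) l := by
        rw [slopeOn, hldef]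
      rw [← this]; linarith
    have hevF : ∀ᶠ y in l, |F x - F y| / dist x y < slopeOn Ω F x + η :=
      eventually_lt_of_limsup_lt hlt hbdd
    have hevG : ∀ᶠ y in l, |χ x * F x - χ y * F y| / dist x y ≤ slopeOn Ω F x + L * |F x| + η := by
      filter_upwards [hevF, hne] with y hyF hyne
      have := hq y (fun hh => hyne.2 (by simp [hh]))
      linarith
    have hcob : Filter.IsCoboundedUnder (· ≤ ·) l (fun y => |χ x * F x - χ y * F y| / dist x y) :=
      Filter.isCoboundedUnder_le_of_le l (x := 0)
        (fun y => div_nonneg (abs_nonneg _) dist_nonneg)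
    have : slopeOn Ω (fun y => χ y * F y) x =
        Filter.limsup (fun y => |χ x * F x - χ y * F y| / dist x y) l := by
      rw [slopeOn, hldef]
    rw [this]
    exact Filter.limsup_le_of_le hcob hevG
  refine le_of_forall_sub_le fun ε hε => ?_
  linarith [key ε hε]

lemma clamp_lip (a b : ℝ) : |max 0 (min 1 a) - max 0 (min 1 b)| ≤ |a - b| := by
  rw [max_comm 0 (min 1 a), max_comm 0 (min 1 b), min_comm 1 a, min_comm 1 b]
  refine (abs_max_sub_max_le_abs _ _ _).trans ?_
  have := abs_min_sub_min_le_max a 1 b 1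
  simpa using this

lemma sq_add_le (a b ε : ℝ) (ha : 0 ≤ a) (hb : 0 ≤ b) (hε : 0 < ε) :
    (a + b) ^ 2 ≤ (1 + ε) * a ^ 2 + (1 + ε⁻¹) * b ^ 2 := by
  have h1 : ε * ε⁻¹ = 1 := mul_inv_cancel₀ hε.ne'
  have h2 : 0 < ε⁻¹ := inv_pos.2 hε
  nlinarith [sq_nonneg (ε * a - b), sq_nonneg (a - ε⁻¹ * b), mul_pos hε h2]

open ENNReal in
lemma liminf_aux {w u v : ℕ → ℝ≥0∞} {c' c : ℝ≥0∞} (hc' : c' ≠ ∞)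
    (hw : ∀ n, w n ≤ c' * u n + v n) (hv : ∀ᶠ n in atTop, v n ≤ c) :
    Filter.liminf w Filter.atTop ≤ c' * Filter.liminf u Filter.atTop + c := by
  have h1 : ∀ᶠ n in Filter.atTop, w n ≤ c' * u n + c :=
    hv.mono fun n hn => (hw n).trans (add_le_add_right hn _)
  have hmono : Monotone (fun x : ℝ≥0∞ => c' * x + c) :=
    fun x y h => add_le_add_left (mul_le_mul_right h _) _
  have hcont : ContinuousAt (fun x : ℝ≥0∞ => c' * x + c)
      (Filter.liminf u Filter.atTop) :=
    ((ENNReal.continuous_const_mul hc').add continuous_const).continuousAt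
  calc Filter.liminf w Filter.atTop
      ≤ Filter.liminf (fun n => c' * u n + c) Filter.atTop := Filter.liminf_le_liminf h1
    _ = c' * Filter.liminf u Filter.atTop + c := by
        rw [hmono.map_liminf_of_continuousAt u hcont]
        rfl

open ENNReal in
lemma eps_removal {A B : ℝ≥0∞}
    (h : ∀ ε : ℝ, 0 < ε → ∀ c : ℝ≥0∞, 0 < c → A ≤ ENNReal.ofReal (1 + ε) * B + c) :
    A ≤ B := by
  rcases eq_or_ne B ∞ with hB | hB
  · rw [hB]; exact le_top
  refine ENNReal.le_of_forall_pos_le_add fun η hη hBlt => ?_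
  have hη' : (0:ℝ) < (η:ℝ) := by exact_mod_cast hη
  set ε : ℝ := ((η : ℝ)/2) / (B.toReal + 1) with hεdef
  have hBt : 0 ≤ B.toReal := ENNReal.toReal_nonneg
  have hεpos : 0 < ε := div_pos (by linarith) (by linarith)
  have hc : (0:ℝ≥0∞) < ENNReal.ofReal ((η:ℝ)/2) := by
    rw [ENNReal.ofReal_pos]; linarith
  refine (h ε hεpos _ hc).trans ?_
  have key : ENNReal.ofReal (1 + ε) * B ≤ B + ENNReal.ofReal ((η:ℝ)/2) := by
    rw [ENNReal.ofReal_add (by norm_num) hεpos.le, ENNReal.ofReal_one, add_mul, one_mul]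
    refine add_le_add_right ?_ B
    have h2 : ENNReal.ofReal ε * B = ENNReal.ofReal (ε * B.toReal) := by
      rw [ENNReal.ofReal_mul hεpos.le, ENNReal.ofReal_toReal hB]
    rw [h2]
    refine ENNReal.ofReal_le_ofReal ?_
    rw [hεdef, div_mul_eq_mul_div, div_le_iff₀ (by linarith)]
    nlinarith
  calc ENNReal.ofReal (1 + ε) * B + ENNReal.ofReal ((η:ℝ)/2)
      ≤ (B + ENNReal.ofReal ((η:ℝ)/2)) + ENNReal.ofReal ((η:ℝ)/2) := add_le_add_left key _
    _ = B + (ENNReal.ofReal ((η:ℝ)/2) + ENNReal.ofReal ((η:ℝ)/2)) := by ring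
    _ = B + ENNReal.ofReal ((η:ℝ)) := by rw [← ENNReal.ofReal_add (by linarith) (by linarith)]; norm_num
    _ = B + (η : ℝ≥0∞) := by rw [ENNReal.ofReal_coe_nnreal]


lemma cheeger_mono [MeasurableSpace X] [BorelSpace X] (μ : Measure X)
    {Ω : Set X} (hΩ : IsOpen Ω) (f : X → ℝ) :
    cheegerEnergy μ Ω f ≤ cheegerEnergy μ Set.univ f := by
  rw [cheegerEnergy]
  refine le_iInf fun F => le_iInf fun hF1 => le_iInf fun hF2 => ?_
  have hF1' : ∀ n, LocLipschitzOn Ω (F n) := by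
    intro n x hx
    obtain ⟨K, t, ht, hKt⟩ := hF1 n x (Set.mem_univ x)
    rw [nhdsWithin_univ] at ht
    exact ⟨K, t, nhdsWithin_le_nhds ht, hKt⟩
  have hF2' : Filter.Tendsto
      (fun n => ∫⁻ x in Ω, ENNReal.ofReal ((F n x - f x) ^ 2) ∂μ)
      Filter.atTop (nhds 0) := by
    refine tendsto_of_tendsto_of_tendsto_of_le_of_le tendsto_const_nhds hF2
      (fun n => zero_le) (fun n => lintegral_mono_set (Set.subset_univ Ω))
  refine le_trans (iInf_le_of_le F (iInf_le_of_le hF1' (iInf_le_of_le hF2' le_rfl))) ?_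
  refine Filter.liminf_le_liminf (Filter.Eventually.of_forall fun n => ?_)
  refine ENNReal.div_le_div_right ?_ 2
  calc ∫⁻ x in Ω, ENNReal.ofReal (slopeOn Ω (F n) x ^ 2) ∂μ
      = ∫⁻ x in Ω, ENNReal.ofReal (slopeOn Set.univ (F n) x ^ 2) ∂μ := by
        refine setLIntegral_congr_fun hΩ.measurableSet (fun x hx => ?_)
        rw [slopeOn_univ_eq hΩ hx]
    _ ≤ ∫⁻ x in Set.univ, ENNReal.ofReal (slopeOn Set.univ (F n) x ^ 2) ∂μ :=
        lintegral_mono_set (Set.subset_univ Ω)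

lemma cheeger_zero [MeasurableSpace X] (μ : Measure X) (U : Set X) :
    cheegerEnergy μ U (fun _ => (0:ℝ)) = 0 := by
  refine le_antisymm ?_ zero_le
  have h1 : ∀ n : ℕ, LocLipschitzOn U (fun _ : X => (0:ℝ)) := by
    intro n x hx
    exact ⟨1, Set.univ, Filter.univ_mem,
      LipschitzOnWith.mk_one (fun a _ b _ => by simp [dist_nonneg])⟩
  have h2 : Filter.Tendsto
      (fun n : ℕ => ∫⁻ x in U, ENNReal.ofReal (((fun _ : X => (0:ℝ)) x - (fun _ : X => (0:ℝ)) x) ^ 2) ∂μ)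
      Filter.atTop (nhds 0) := by
    simp
  refine le_trans (iInf_le_of_le (fun _ _ => (0:ℝ)) (iInf_le_of_le h1 (iInf_le_of_le h2 le_rfl))) ?_
  have hz : ∀ x : X, slopeOn U (fun _ : X => (0:ℝ)) x = 0 := fun x =>
    slopeOn_zero_of_ball one_pos (fun y _ => rfl)
  have hint : ∀ x : X, ENNReal.ofReal ((slopeOn U (fun _ : X => (0:ℝ)) x) ^ 2) = 0 := by
    intro x; rw [hz x]; simp
  have : (fun n : ℕ => (∫⁻ x in U, ENNReal.ofReal ((slopeOn U ((fun _ _ => (0:ℝ)) n) x) ^ 2) ∂μ) / 2)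
      = fun _ : ℕ => (0:ℝ≥0∞) := by
    funext n; simp [hint]
  rw [this, Filter.liminf_const]


lemma cheeger_univ_le [MeasurableSpace X] [BorelSpace X] (μ : Measure X)
    {Ω : Set X} (hΩ : IsOpen Ω) (f : X → ℝ)
    (hcpt : IsCompact (closure {x | f x ≠ 0}))
    (hsupp : closure {x | f x ≠ 0} ⊆ Ω)
    (hzero : ∀ x ∉ Ω, f x = 0) :
    cheegerEnergy μ Set.univ f ≤ cheegerEnergy μ Ω f := by
  set S := closure {x | f x ≠ 0} with hSdef
  rcases S.eq_empty_or_nonempty with hSe | hSne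
  · have hf0 : f = fun _ => (0:ℝ) := by
      funext x
      by_contra hx
      have hmem : x ∈ S := subset_closure hx
      rw [hSe] at hmem
      exact hmem
    rw [hf0, cheeger_zero]
    exact zero_le
  obtain ⟨δ, hδpos, hδsub⟩ := hcpt.exists_thickening_subset_open hΩ hsupp
  have hdistΩ : ∀ x, x ∉ Ω → δ ≤ infDist x S := by
    intro x hx
    by_contra h
    push_neg at h
    obtain ⟨z, hz, hdz⟩ := (infDist_lt_iff hSne).1 h
    exact hx (hδsub (mem_thickening_iff.2 ⟨z, hz, hdz⟩))
  set L : ℝ := 4 / δ with hLdef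
  have hLpos : 0 < L := by positivity
  set χ : X → ℝ := fun y => max 0 (min 1 (2 - L * infDist y S)) with hχdef
  have hχ0 : ∀ y, 0 ≤ χ y := fun y => le_max_left _ _
  have hχ1 : ∀ y, χ y ≤ 1 := fun y => max_le zero_le_one (min_le_left _ _)
  have hinfd : ∀ y z : X, |infDist y S - infDist z S| ≤ dist y z := by
    intro y z
    refine abs_sub_le_iff.2 ⟨?_, ?_⟩
    · linarith [infDist_le_infDist_add_dist (x := y) (y := z) (s := S)]
    · have := infDist_le_infDist_add_dist (x := z) (y := y) (s := S)
      rw [dist_comm z y] at this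
      linarith
  have hχlip : ∀ y z, |χ y - χ z| ≤ L * dist y z := by
    intro y z
    refine (clamp_lip _ _).trans ?_
    have h1 : (2 - L * infDist y S) - (2 - L * infDist z S)
        = L * (infDist z S - infDist y S) := by ring
    rw [h1, abs_mul, abs_of_pos hLpos]
    have := hinfd z y
    rw [dist_comm z y] at this
    exact mul_le_mul_of_nonneg_left this hLpos.le
  have hχ_one : ∀ y, infDist y S < δ/4 → χ y = 1 := by
    intro y hy
    have hnn : 0 ≤ infDist y S := infDist_nonneg
    have h2 : (1:ℝ) ≤ 2 - L * infDist y S := by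
      have hL4 : L * infDist y S ≤ 1 := by
        rw [hLdef, div_mul_eq_mul_div, div_le_one hδpos]
        nlinarith
      linarith
    rw [hχdef]
    simp only
    rw [min_eq_left h2, max_eq_right zero_le_one]
  have hχ_zero : ∀ y, δ/2 ≤ infDist y S → χ y = 0 := by
    intro y hy
    have h2 : 2 - L * infDist y S ≤ 0 := by
      have h3 : L * (δ/2) ≤ L * infDist y S := mul_le_mul_of_nonneg_left hy hLpos.le
      have h4 : L * (δ/2) = 2 := by rw [hLdef]; field_simp; ring
      linarith
    have h5 : min 1 (2 - L * infDist y S) ≤ 0 := (min_le_right _ _).trans h2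
    rw [hχdef]
    simp only
    exact max_eq_left h5
  have hfS : ∀ x, f x ≠ 0 → infDist x S = 0 := fun x hx =>
    infDist_zero_of_mem (subset_closure hx)
  have hχf : ∀ x, f x ≠ 0 → χ x = 1 := fun x hx =>
    hχ_one x (by rw [hfS x hx]; positivity)
  have hfΩ₂ : ∀ x, δ/4 ≤ infDist x S → f x = 0 := by
    intro x hx
    by_contra h
    rw [hfS x h] at hx
    linarith
  rw [cheegerEnergy]
  refine le_iInf fun F => le_iInf fun hF1 => le_iInf fun hF2 => ?_
  set G : ℕ → X → ℝ := fun n y => χ y * F n y with hGdef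
  have hχΩc : ∀ x, x ∉ Ω → ∀ y ∈ ball x (δ/4), χ y = 0 := by
    intro x hx y hy
    refine hχ_zero y ?_
    have h1 : infDist x S ≤ infDist y S + dist x y := infDist_le_infDist_add_dist
    have h2 : dist x y < δ/4 := by rw [dist_comm]; exact mem_ball.1 hy
    have h3 := hdistΩ x hx
    linarith
  have hcontF : ∀ n, ContinuousOn (F n) Ω := by
    intro n x hx
    obtain ⟨K, t, ht, hKt⟩ := hF1 n x hx
    have hx_t : x ∈ t := by
      have ht' := ht
      rw [hΩ.nhdsWithin_eq hx] at ht'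
      exact mem_of_mem_nhds ht'
    exact (hKt.continuousOn.continuousWithinAt hx_t).mono_of_mem_nhdsWithin ht
  have hG1 : ∀ n, LocLipschitzOn Set.univ (G n) := by
    intro n x _
    by_cases hx : x ∈ Ω
    · obtain ⟨K, t, ht, hKt⟩ := hF1 n x hx
      rw [hΩ.nhdsWithin_eq hx] at ht
      have hxt : x ∈ t := mem_of_mem_nhds ht
      have hs : t ∩ ball x 1 ∈ nhds x := Filter.inter_mem ht (ball_mem_nhds x one_pos)
      have hbF : ∀ y ∈ t ∩ ball x 1, |F n y| ≤ |F n x| + K := by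
        intro y hy
        have h1 : dist (F n y) (F n x) ≤ K * dist y x := hKt.dist_le_mul y hy.1 x hxt
        have h2 : dist y x < 1 := mem_ball.1 hy.2
        have h3 : |F n y - F n x| ≤ K * dist y x := by rwa [Real.dist_eq] at h1
        have h4 : (K:ℝ) * dist y x ≤ K := by
          calc (K:ℝ) * dist y x ≤ (K:ℝ) * 1 :=
                mul_le_mul_of_nonneg_left h2.le K.coe_nonneg
            _ = K := mul_one _
        calc |F n y| = |F n x + (F n y - F n x)| := by ring_nf
          _ ≤ |F n x| + |F n y - F n x| := abs_add_le _ _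
          _ ≤ |F n x| + K := by linarith
      refine ⟨Real.toNNReal ((K:ℝ) + (|F n x| + K) * L), t ∩ ball x 1,
        mem_nhdsWithin_of_mem_nhds hs, LipschitzOnWith.of_dist_le' ?_⟩
      intro y hy z hz
      rw [Real.dist_eq]
      have hdec : G n y - G n z = χ z * (F n y - F n z) + F n y * (χ y - χ z) := by
        rw [hGdef]; ring
      calc |G n y - G n z| ≤ χ z * |F n y - F n z| + |F n y| * |χ y - χ z| := by
            rw [hdec]
            refine (abs_add_le _ _).trans (add_le_add ?_ ?_)
            · rw [abs_mul, abs_of_nonneg (hχ0 z)]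
            · rw [abs_mul]
        _ ≤ 1 * ((K:ℝ) * dist y z) + (|F n x| + K) * (L * dist y z) := by
            refine add_le_add ?_ ?_
            · refine mul_le_mul (hχ1 z) ?_ (abs_nonneg _) zero_le_one
              have h5 := hKt.dist_le_mul y hy.1 z hz.1
              rwa [Real.dist_eq] at h5
            · refine mul_le_mul (hbF y hy) (hχlip y z) (abs_nonneg _) ?_
              positivity
        _ = ((K:ℝ) + (|F n x| + K) * L) * dist y z := by ring
    · refine ⟨1, ball x (δ/4),
        mem_nhdsWithin_of_mem_nhds (ball_mem_nhds x (by positivity)), ?_⟩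
      refine LipschitzOnWith.mk_one ?_
      intro a ha b hb
      have ha0 : G n a = 0 := by rw [hGdef]; simp [hχΩc x hx a ha]
      have hb0 : G n b = 0 := by rw [hGdef]; simp [hχΩc x hx b hb]
      simp [ha0, hb0, dist_nonneg]
  have hptw : ∀ n x, ENNReal.ofReal ((G n x - f x)^2)
      ≤ Ω.indicator (fun x => ENNReal.ofReal ((F n x - f x)^2)) x := by
    intro n x
    by_cases hx : x ∈ Ω
    · rw [Set.indicator_of_mem hx]
      refine ENNReal.ofReal_le_ofReal ?_
      by_cases hfx : f x = 0
      · rw [hGdef]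
        simp only [hfx, sub_zero]
        calc (χ x * F n x)^2 = χ x ^ 2 * (F n x)^2 := by ring
          _ ≤ 1 * (F n x)^2 := by
              refine mul_le_mul_of_nonneg_right ?_ (sq_nonneg _)
              calc χ x ^ 2 ≤ 1 ^ 2 := pow_le_pow_left₀ (hχ0 x) (hχ1 x) 2
                _ = 1 := one_pow 2
          _ = (F n x)^2 := one_mul _
      · rw [hGdef]
        simp only [hχf x hfx, one_mul]
        exact le_rfl
    · rw [Set.indicator_of_notMem hx]
      have h1 : χ x = 0 := hχ_zero x (by linarith [hdistΩ x hx])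
      rw [hGdef]
      simp [h1, hzero x hx]
  have hG2 : Filter.Tendsto
      (fun n => ∫⁻ x in Set.univ, ENNReal.ofReal ((G n x - f x) ^ 2) ∂μ)
      Filter.atTop (nhds 0) := by
    refine tendsto_of_tendsto_of_tendsto_of_le_of_le tendsto_const_nhds hF2
      (fun n => zero_le) fun n => ?_
    calc ∫⁻ x in Set.univ, ENNReal.ofReal ((G n x - f x)^2) ∂μ
        = ∫⁻ x, ENNReal.ofReal ((G n x - f x)^2) ∂μ := setLIntegral_univ _
      _ ≤ ∫⁻ x, Ω.indicator (fun x => ENNReal.ofReal ((F n x - f x)^2)) x ∂μ :=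
          lintegral_mono (hptw n)
      _ = ∫⁻ x in Ω, ENNReal.ofReal ((F n x - f x)^2) ∂μ :=
          lintegral_indicator hΩ.measurableSet _
  set An : ℕ → ℝ≥0∞ := fun n => ∫⁻ x in Ω, ENNReal.ofReal ((slopeOn Ω (F n) x)^2) ∂μ with hAdef
  set Bn : ℕ → ℝ≥0∞ := fun n => ∫⁻ x in Ω, ENNReal.ofReal ((F n x - f x)^2) ∂μ with hBdef
  set Tn : ℕ → ℝ≥0∞ :=
    fun n => ∫⁻ x in Set.univ, ENNReal.ofReal ((slopeOn Set.univ (G n) x)^2) ∂μ with hTdef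
  have hmain : cheegerEnergy μ Set.univ f ≤
      Filter.liminf (fun n => Tn n / 2) Filter.atTop := by
    rw [cheegerEnergy]
    exact iInf_le_of_le G (iInf_le_of_le hG1 (iInf_le_of_le hG2 le_rfl))
  set Ω₁ := Ω ∩ {x | infDist x S < δ/4} with hΩ₁def
  set Ω₂ := Ω ∩ {x | δ/4 ≤ infDist x S} with hΩ₂def
  have hΩ₁o : IsOpen Ω₁ := hΩ.inter (isOpen_lt (continuous_infDist_pt S) continuous_const)
  have hΩ₂m : MeasurableSet Ω₂ :=
    hΩ.measurableSet.inter
      (measurableSet_le measurable_const (continuous_infDist_pt S).measurable)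
  have hdisj : Disjoint Ω₁ Ω₂ := by
    rw [Set.disjoint_left]
    rintro x ⟨-, h1⟩ ⟨-, h2⟩
    simp only [Set.mem_setOf_eq] at h1 h2
    exact absurd h2 (not_le.2 h1)
  have hunion : Ω₁ ∪ Ω₂ = Ω := by
    ext x
    constructor
    · rintro (⟨h, -⟩ | ⟨h, -⟩) <;> exact h
    · intro hx
      rcases lt_or_ge (infDist x S) (δ/4) with h | h
      exacts [Or.inl ⟨hx, h⟩, Or.inr ⟨hx, h⟩]
  have hsplit : ∀ g : X → ℝ≥0∞,
      ∫⁻ x in Ω, g x ∂μ = ∫⁻ x in Ω₁, g x ∂μ + ∫⁻ x in Ω₂, g x ∂μ := by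
    intro g
    rw [← hunion, lintegral_union hΩ₂m hdisj]
  have hslope_eq : ∀ n x, x ∈ Ω₁ → slopeOn Ω (G n) x = slopeOn Ω (F n) x := by
    intro n x hx
    have hr : 0 < δ/4 - infDist x S := by
      have := hx.2
      simp only [Set.mem_setOf_eq] at this
      linarith
    refine slopeOn_congr_ball hr fun y hy => ?_
    have h1 : infDist y S ≤ infDist x S + dist y x := infDist_le_infDist_add_dist
    have h2 : dist y x < δ/4 - infDist x S := mem_ball.1 hy
    have h3 : infDist y S < δ/4 := by linarith
    rw [hGdef]
    simp [hχ_one y h3]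
  have hslope_b : ∀ n x, x ∈ Ω₂ → slopeOn Ω (G n) x ≤ slopeOn Ω (F n) x + L * |F n x| := by
    intro n x hx
    exact slopeOn_mul_le hΩ hx.1 hχ0 hχ1 hLpos.le hχlip (hF1 n x hx.1)
  have hTn_eq : ∀ n, Tn n = ∫⁻ x in Ω, ENNReal.ofReal ((slopeOn Ω (G n) x)^2) ∂μ := by
    intro n
    have h1 : (fun x => ENNReal.ofReal ((slopeOn Set.univ (G n) x)^2))
        = Ω.indicator (fun x => ENNReal.ofReal ((slopeOn Set.univ (G n) x)^2)) := by
      funext x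
      by_cases hx : x ∈ Ω
      · rw [Set.indicator_of_mem hx]
      · rw [Set.indicator_of_notMem hx]
        have h2 : slopeOn Set.univ (G n) x = 0 := by
          refine slopeOn_zero_of_ball (show (0:ℝ) < δ/4 by positivity) fun y hy => ?_
          rw [hGdef]
          simp [hχΩc x hx y hy]
        rw [h2]
        simp
    rw [hTdef]
    simp only
    rw [setLIntegral_univ, h1, lintegral_indicator hΩ.measurableSet]
    refine setLIntegral_congr_fun hΩ.measurableSet (fun x hx => ?_)
    rw [slopeOn_univ_eq hΩ hx]
  refine eps_removal fun ε hε c hc => ?_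
  set Cε : ℝ≥0∞ := ENNReal.ofReal (1 + ε⁻¹) * ENNReal.ofReal (L^2) with hCdef
  have hCne : Cε ≠ ⊤ := ENNReal.mul_ne_top ENNReal.ofReal_ne_top ENNReal.ofReal_ne_top
  have hone_le : (1:ℝ≥0∞) ≤ ENNReal.ofReal (1 + ε) := by
    rw [← ENNReal.ofReal_one]
    exact ENNReal.ofReal_le_ofReal (by linarith)
  have hbound : ∀ n, Tn n ≤ ENNReal.ofReal (1 + ε) * An n + Cε * Bn n := by
    intro n
    rw [hTn_eq n, hsplit]
    have h1 : ∫⁻ x in Ω₁, ENNReal.ofReal ((slopeOn Ω (G n) x)^2) ∂μ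
        = ∫⁻ x in Ω₁, ENNReal.ofReal ((slopeOn Ω (F n) x)^2) ∂μ := by
      refine setLIntegral_congr_fun hΩ₁o.measurableSet
        (fun x hx => ?_)
      rw [hslope_eq n x hx]
    have hFm : AEMeasurable (F n) (μ.restrict Ω₂) :=
      ((hcontF n).aemeasurable hΩ.measurableSet).mono_measure
        (Measure.restrict_mono Set.inter_subset_left le_rfl)
    have hcont2 : Continuous (fun y : ℝ => ENNReal.ofReal ((1+ε⁻¹) * (L*|y|)^2)) := by
      exact ENNReal.continuous_ofReal.comp
        (continuous_const.mul ((continuous_const.mul continuous_abs).pow 2))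
    have hF2meas : AEMeasurable (fun x => ENNReal.ofReal ((1+ε⁻¹) * (L*|F n x|)^2))
        (μ.restrict Ω₂) := hcont2.measurable.comp_aemeasurable hFm
    have h2 : ∫⁻ x in Ω₂, ENNReal.ofReal ((slopeOn Ω (G n) x)^2) ∂μ
        ≤ ENNReal.ofReal (1 + ε) * ∫⁻ x in Ω₂, ENNReal.ofReal ((slopeOn Ω (F n) x)^2) ∂μ
          + Cε * Bn n := by
      have hpt : ∀ x ∈ Ω₂, ENNReal.ofReal ((slopeOn Ω (G n) x)^2)
          ≤ ENNReal.ofReal (1+ε) * ENNReal.ofReal ((slopeOn Ω (F n) x)^2)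
            + ENNReal.ofReal ((1+ε⁻¹) * (L*|F n x|)^2) := by
        intro x hx
        have ha : 0 ≤ slopeOn Ω (F n) x := slopeOn_nonneg _ _ _
        have hb : (0:ℝ) ≤ L * |F n x| := by positivity
        have h3 : (slopeOn Ω (G n) x)^2
            ≤ (1+ε)*(slopeOn Ω (F n) x)^2 + (1+ε⁻¹)*(L*|F n x|)^2 := by
          have h4 : (slopeOn Ω (G n) x)^2 ≤ (slopeOn Ω (F n) x + L*|F n x|)^2 :=
            pow_le_pow_left₀ (slopeOn_nonneg _ _ _) (hslope_b n x hx) 2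
          exact h4.trans (sq_add_le _ _ ε ha hb hε)
        calc ENNReal.ofReal ((slopeOn Ω (G n) x)^2)
            ≤ ENNReal.ofReal ((1+ε)*(slopeOn Ω (F n) x)^2 + (1+ε⁻¹)*(L*|F n x|)^2) :=
              ENNReal.ofReal_le_ofReal h3
          _ = ENNReal.ofReal ((1+ε)*(slopeOn Ω (F n) x)^2)
              + ENNReal.ofReal ((1+ε⁻¹)*(L*|F n x|)^2) := by
              rw [ENNReal.ofReal_add (by positivity) (by positivity)]
          _ = ENNReal.ofReal (1+ε) * ENNReal.ofReal ((slopeOn Ω (F n) x)^2)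
              + ENNReal.ofReal ((1+ε⁻¹)*(L*|F n x|)^2) := by
              rw [ENNReal.ofReal_mul (by positivity)]
      calc ∫⁻ x in Ω₂, ENNReal.ofReal ((slopeOn Ω (G n) x)^2) ∂μ
          ≤ ∫⁻ x in Ω₂, (ENNReal.ofReal (1+ε) * ENNReal.ofReal ((slopeOn Ω (F n) x)^2)
              + ENNReal.ofReal ((1+ε⁻¹) * (L*|F n x|)^2)) ∂μ :=
            lintegral_mono_ae (ae_restrict_of_forall_mem hΩ₂m hpt)
        _ = ENNReal.ofReal (1+ε) * ∫⁻ x in Ω₂, ENNReal.ofReal ((slopeOn Ω (F n) x)^2) ∂μ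
            + ∫⁻ x in Ω₂, ENNReal.ofReal ((1+ε⁻¹) * (L*|F n x|)^2) ∂μ := by
            rw [lintegral_add_right' _ hF2meas,
              lintegral_const_mul' _ _ ENNReal.ofReal_ne_top]
        _ ≤ ENNReal.ofReal (1+ε) * ∫⁻ x in Ω₂, ENNReal.ofReal ((slopeOn Ω (F n) x)^2) ∂μ
            + Cε * Bn n := by
            refine add_le_add_right ?_ _
            have hrw : ∀ x ∈ Ω₂, ENNReal.ofReal ((1+ε⁻¹) * (L*|F n x|)^2)
                = Cε * ENNReal.ofReal ((F n x - f x)^2) := by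
              intro x hx
              have hfx : f x = 0 := hfΩ₂ x hx.2
              have h6 : (1+ε⁻¹) * (L*|F n x|)^2 = (1+ε⁻¹) * (L^2 * (F n x - f x)^2) := by
                rw [hfx]
                rw [sub_zero, mul_pow, sq_abs]
              rw [h6, hCdef]
              rw [ENNReal.ofReal_mul (by positivity), ENNReal.ofReal_mul (by positivity),
                mul_assoc]
            calc ∫⁻ x in Ω₂, ENNReal.ofReal ((1+ε⁻¹) * (L*|F n x|)^2) ∂μ
                = ∫⁻ x in Ω₂, Cε * ENNReal.ofReal ((F n x - f x)^2) ∂μ :=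
                  setLIntegral_congr_fun hΩ₂m hrw
              _ = Cε * ∫⁻ x in Ω₂, ENNReal.ofReal ((F n x - f x)^2) ∂μ :=
                  lintegral_const_mul' _ _ hCne
              _ ≤ Cε * Bn n := by
                  refine mul_le_mul_right ?_ _
                  exact lintegral_mono_set Set.inter_subset_left
    calc ∫⁻ x in Ω₁, ENNReal.ofReal ((slopeOn Ω (G n) x)^2) ∂μ
          + ∫⁻ x in Ω₂, ENNReal.ofReal ((slopeOn Ω (G n) x)^2) ∂μ
        ≤ ∫⁻ x in Ω₁, ENNReal.ofReal ((slopeOn Ω (F n) x)^2) ∂μ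
          + (ENNReal.ofReal (1+ε) * ∫⁻ x in Ω₂, ENNReal.ofReal ((slopeOn Ω (F n) x)^2) ∂μ
            + Cε * Bn n) := by
          rw [h1]
          exact add_le_add_right h2 _
      _ ≤ ENNReal.ofReal (1+ε) * ∫⁻ x in Ω₁, ENNReal.ofReal ((slopeOn Ω (F n) x)^2) ∂μ
          + (ENNReal.ofReal (1+ε) * ∫⁻ x in Ω₂, ENNReal.ofReal ((slopeOn Ω (F n) x)^2) ∂μ
            + Cε * Bn n) := by
          refine add_le_add_left ?_ _
          conv_lhs => rw [← one_mul (∫⁻ x in Ω₁, ENNReal.ofReal ((slopeOn Ω (F n) x)^2) ∂μ)]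
          exact mul_le_mul_left hone_le _
      _ = ENNReal.ofReal (1+ε) * An n + Cε * Bn n := by
          rw [hAdef]
          simp only
          rw [hsplit (fun x => ENNReal.ofReal ((slopeOn Ω (F n) x)^2))]
          ring
  have hdiv : ∀ n, Tn n / 2 ≤ ENNReal.ofReal (1+ε) * (An n / 2) + Cε * Bn n := by
    intro n
    calc Tn n / 2 ≤ (ENNReal.ofReal (1+ε) * An n + Cε * Bn n) / 2 :=
        ENNReal.div_le_div_right (hbound n) 2
      _ = ENNReal.ofReal (1+ε) * (An n / 2) + (Cε * Bn n) / 2 := by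
          rw [ENNReal.add_div, mul_div_assoc]
      _ ≤ ENNReal.ofReal (1+ε) * (An n / 2) + Cε * Bn n :=
          add_le_add_right ENNReal.half_le_self _
  have hBtend : Filter.Tendsto (fun n => Cε * Bn n) Filter.atTop (nhds 0) := by
    have h7 := ENNReal.Tendsto.const_mul (a := Cε) hF2 (Or.inr hCne)
    simpa using h7
  have hev : ∀ᶠ n in Filter.atTop, Cε * Bn n ≤ c := hBtend.eventually (eventually_le_nhds hc)
  calc cheegerEnergy μ Set.univ f ≤ Filter.liminf (fun n => Tn n / 2) Filter.atTop := hmain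
    _ ≤ ENNReal.ofReal (1+ε) * Filter.liminf (fun n => An n / 2) Filter.atTop + c :=
        liminf_aux ENNReal.ofReal_ne_top hdiv hev
    _ = ENNReal.ofReal (1+ε)
        * Filter.liminf (fun n => (∫⁻ x in Ω, ENNReal.ofReal ((slopeOn Ω (F n) x)^2) ∂μ) / 2)
          Filter.atTop + c := rfl


end ZEHelpers


/-- the zero extension of a Lipschitz function with compact
support in `Ω` preserves the `L²` norm and the Cheeger energy, hence the
`W^{1,2}` norm. Here `f : X → ℝ` vanishes outside `Ω` and is Lipschitz on `Ω`,
so that `f` itself is the zero extension `g` of its restriction to `Ω`. -/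
theorem zero_extension_isometry
    [MetricSpace X] [CompleteSpace X] [TopologicalSpace.SeparableSpace X]
    [MeasurableSpace X] [BorelSpace X]
    (μ : Measure X)
    (hfin : ∀ s : Set X, Bornology.IsBounded s → μ s < ⊤)
    (Ω : Set X) (hΩ : IsOpen Ω) (f : X → ℝ)
    (hlip : ∃ K : NNReal, LipschitzOnWith K f Ω)
    (hcpt : IsCompact (closure {x | f x ≠ 0}))
    (hsupp : closure {x | f x ≠ 0} ⊆ Ω)
    (hzero : ∀ x ∉ Ω, f x = 0) :
    (∫⁻ x in Ω, ENNReal.ofReal ((f x) ^ 2) ∂μ)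
        = (∫⁻ x, ENNReal.ofReal ((f x) ^ 2) ∂μ) ∧
      cheegerEnergy μ Ω f = cheegerEnergy μ Set.univ f := by
  constructor
  · have hind : ∀ x, ENNReal.ofReal ((f x) ^ 2)
        = Ω.indicator (fun x => ENNReal.ofReal ((f x) ^ 2)) x := by
      intro x
      by_cases hx : x ∈ Ω
      · rw [Set.indicator_of_mem hx]
      · rw [Set.indicator_of_notMem hx, hzero x hx]
        simp
    calc ∫⁻ x in Ω, ENNReal.ofReal ((f x) ^ 2) ∂μ
        = ∫⁻ x, Ω.indicator (fun x => ENNReal.ofReal ((f x) ^ 2)) x ∂μ :=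
          (lintegral_indicator hΩ.measurableSet _).symm
      _ = ∫⁻ x, ENNReal.ofReal ((f x) ^ 2) ∂μ :=
          lintegral_congr fun x => (hind x).symm
  · exact le_antisymm (cheeger_mono μ hΩ f) (cheeger_univ_le μ hΩ f hcpt hsupp hzero)
end

section
/- Let (X,d) be a metric space, Ω ⊆ X open with ∂Ω ≠ ∅, δ the signed distance from ∂Ω, and A⁺, A⁻ the branching sets associated with the 1-Lipschitz function δ. If x ∈ X ∖ (A⁺ ∪ A⁻) and y₁, y₂ ∈ ∂Ω satisfy d(x,y₁) = d(x,y₂) = |δ(x)|, then y₁ = y₂. In particular, every point of the non-branched transport set T_δ^{nb} has at most one nearest point in ∂Ω, so the foot-point projection π_f : T_δ^{nb} → ∂Ω is well defined. -/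
open Metric Set Filter MeasureTheory

variable {X : Type*}

open scoped Classical in
/-- Signed distance from the boundary of `Ω`. -/
noncomputable def signedDistFr [MetricSpace X] (Ω : Set X) (x : X) : ℝ :=
  if x ∈ Ω then Metric.infDist x (frontier Ω) else -Metric.infDist x (frontier Ω)
/-- a point outside the branching sets of the signed distance
has at most one nearest point in `∂Ω`, so the foot-point projection is well
defined on `T_δ^{nb}`. -/
theorem footpoint_unique
    [MetricSpace X] (Ω : Set X) (hΩ : IsOpen Ω) (hfr : (frontier Ω).Nonempty)
    (x : X) (hx : x ∉ Aplus (signedDistFr Ω) ∪ Aminus (signedDistFr Ω))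
    (y₁ y₂ : X) (hy₁ : y₁ ∈ frontier Ω) (hy₂ : y₂ ∈ frontier Ω)
    (hd₁ : dist x y₁ = |signedDistFr Ω x|) (hd₂ : dist x y₂ = |signedDistFr Ω x|) :
    y₁ = y₂ := by
  -- notation
  set u := signedDistFr Ω with hu
  have hyΩ : ∀ y ∈ frontier Ω, y ∉ Ω := by
    intro y hy
    rw [hΩ.frontier_eq] at hy
    exact hy.2
  have hδfr : ∀ y ∈ frontier Ω, u y = 0 := by
    intro y hy
    simp [hu, signedDistFr, hyΩ y hy, Metric.infDist_zero_of_mem hy]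
  by_cases h0 : Metric.infDist x (frontier Ω) = 0
  · have habs : |u x| = 0 := by
      by_cases hxΩ : x ∈ Ω <;> simp [hu, signedDistFr, hxΩ, h0]
    have e1 : y₁ = x := by
      have := hd₁; rw [habs] at this
      exact (dist_eq_zero.mp this).symm
    have e2 : y₂ = x := by
      have := hd₂; rw [habs] at this
      exact (dist_eq_zero.mp this).symm
    rw [e1, e2]
  · have hpos : 0 < Metric.infDist x (frontier Ω) :=
      lt_of_le_of_ne Metric.infDist_nonneg (Ne.symm h0)
    by_cases hxΩ : x ∈ Ω
    · -- x ∈ Ω : u x = infDist > 0, (x, yᵢ) ∈ Γ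
      have hux : u x = Metric.infDist x (frontier Ω) := by simp [hu, signedDistFr, hxΩ]
      have habs : |u x| = Metric.infDist x (frontier Ω) := by
        rw [hux]; exact abs_of_pos hpos
      have hg : ∀ y ∈ frontier Ω, dist x y = |u x| → (x, y) ∈ Gamma u := by
        intro y hy hd
        simp only [Gamma, Set.mem_setOf_eq]
        rw [hδfr y hy, hd, sub_zero, habs, hux]
      have hg₁ := hg y₁ hy₁ hd₁
      have hg₂ := hg y₂ hy₂ hd₂
      have hne : y₁ ≠ x := by
        intro h; rw [h] at hd₁; simp [habs] at hd₁; exact h0 hd₁.symm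
      have hxT : x ∈ Tu u := ⟨y₁, hne, Or.inl hg₁⟩
      have hR : (y₁, y₂) ∈ Ru u := by
        by_contra hnR
        exact hx (Or.inl ⟨hxT, y₁, y₂, hg₁, hg₂, hnR⟩)
      rcases hR with h | h
      · have : u y₁ - u y₂ = dist y₁ y₂ := h
        rw [hδfr y₁ hy₁, hδfr y₂ hy₂, sub_zero] at this
        exact dist_eq_zero.mp this.symm
      · have : u y₂ - u y₁ = dist y₂ y₁ := h
        rw [hδfr y₁ hy₁, hδfr y₂ hy₂, sub_zero] at this
        exact (dist_eq_zero.mp this.symm).symm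
    · -- x ∉ Ω : u x = -infDist < 0, (yᵢ, x) ∈ Γ
      have hux : u x = -Metric.infDist x (frontier Ω) := by simp [hu, signedDistFr, hxΩ]
      have habs : |u x| = Metric.infDist x (frontier Ω) := by
        rw [hux, abs_neg]; exact abs_of_pos hpos
      have hg : ∀ y ∈ frontier Ω, dist x y = |u x| → (y, x) ∈ Gamma u := by
        intro y hy hd
        simp only [Gamma, Set.mem_setOf_eq]
        rw [hδfr y hy, hux, zero_sub, neg_neg, dist_comm, hd, habs]
      have hg₁ := hg y₁ hy₁ hd₁
      have hg₂ := hg y₂ hy₂ hd₂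
      have hne : y₁ ≠ x := by
        intro h; rw [h] at hd₁; simp [habs] at hd₁; exact h0 hd₁.symm
      have hxT : x ∈ Tu u := ⟨y₁, hne, Or.inr hg₁⟩
      have hR : (y₁, y₂) ∈ Ru u := by
        by_contra hnR
        exact hx (Or.inr ⟨hxT, y₁, y₂, hg₁, hg₂, hnR⟩)
      rcases hR with h | h
      · have : u y₁ - u y₂ = dist y₁ y₂ := h
        rw [hδfr y₁ hy₁, hδfr y₂ hy₂, sub_zero] at this
        exact dist_eq_zero.mp this.symm
      · have : u y₂ - u y₁ = dist y₂ y₁ := h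
        rw [hδfr y₁ hy₁, hδfr y₂ hy₂, sub_zero] at this
        exact (dist_eq_zero.mp this.symm).symm
end
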